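/- arXiv:2202.13370 — 8 statements merged into one kernel-verified Lean document; each statement's English description precedes it below -/
import Mathlib

section
/- The map dist : L⁰(V_r) × L⁰(V_r) → ℤ, dist([U₁],[U₂]) = n₁₂ + n₂₁, is a metric on the set L⁰(V_r) of homothety classes of R-submodules of V_r: it is non-negative, vanishes exactly on pairs of equal classes, is symmetric, and satisfies the triangle inequality dist([U₁],[U₂]) ≤ dist([U₁],[U₃]) + dist([U₃],[U₂]) for all classes [U₁],[U₂],[U₃]. -/
open Pointwise

namespace SphericalSubmoduleCodes

variable {R : Type*} [CommRing R] {V : Type*} [AddCommGroup V] [Module R V]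

/-- `nmin π U₁ U₂ = min {m ≥ 0 : π^m U₁ ⊆ U₂}`. -/
noncomputable def nmin (π : R) (U₁ U₂ : Submodule R V) : ℕ :=
  sInf {m : ℕ | (π ^ m) • U₁ ≤ U₂}

/-- The distance `dist(U₁,U₂) = min{m : π^m U₁ ⊆ U₂} + min{n : π^n U₂ ⊆ U₁}`
(used for boundary submodules, where `Ũ = U`). -/
noncomputable def distMod (π : R) (U₁ U₂ : Submodule R V) : ℕ :=
  nmin π U₁ U₂ + nmin π U₂ U₁

/-- `m_U = max {0 ≤ m ≤ r : U ⊆ π^m V}`. -/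
noncomputable def mExp (π : R) (r : ℕ) (U : Submodule R V) : ℕ :=
  sSup {m : ℕ | m ≤ r ∧ U ≤ (π ^ m) • (⊤ : Submodule R V)}

/-- `Ũ`, the unique maximal submodule with `π^{m_U} Ũ = U`: the kernel of
`x ↦ π^{m_U} x + U`. -/
noncomputable def tilde (π : R) (r : ℕ) (U : Submodule R V) : Submodule R V :=
  U.comap ((π ^ mExp π r U) • (LinearMap.id : V →ₗ[R] V))

/-- The boundary `∂L(V_r) = {U : π^{r-1} V ⊄ U and U ⊄ π V}`. -/
def boundary (π : R) (r : ℕ) : Set (Submodule R V) :=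
  {U | ¬ ((π ^ (r - 1)) • (⊤ : Submodule R V) ≤ U) ∧ ¬ (U ≤ π • (⊤ : Submodule R V))}

/-- The minimum distance of a code of (boundary) submodules. -/
noncomputable def minDist (π : R) (C : Set (Submodule R V)) : ℕ :=
  sInf {n : ℕ | ∃ U₁ ∈ C, ∃ U₂ ∈ C, U₁ ≠ U₂ ∧ distMod π U₁ U₂ = n}

/-- homothety: `U ∼ U' ↔ Ũ = Ũ'`. -/
noncomputable def homSetoid (π : R) (r : ℕ) : Setoid (Submodule R V) :=
  Setoid.ker (tilde π r)

/-- The distance on homothety classes. -/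
noncomputable def distClass (π : R) (r : ℕ) :
    Quotient (homSetoid (V := V) π r) → Quotient (homSetoid (V := V) π r) → ℕ :=
  Quotient.lift₂
    (fun U₁ U₂ => nmin π (tilde π r U₁) (tilde π r U₂) + nmin π (tilde π r U₂) (tilde π r U₁))
    (by
      intro a₁ b₁ a₂ b₂ h₁ h₂
      have ha : tilde π r a₁ = tilde π r a₂ := h₁
      have hb : tilde π r b₁ = tilde π r b₂ := h₂
      simp only [ha, hb])

/-- The Grassmannian: free rank-`n` submodules. -/
def Grass (R : Type*) [CommRing R] {V : Type*} [AddCommGroup V] [Module R V]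
    (n : ℕ) : Set (Submodule R V) :=
  {U | Module.Free R U ∧ Module.finrank R U = n}

/-- `binom(a,b)_X = ∏_{i=0}^{b-1} (1 - X^{a-i})/(1 - X^{b-i})`. -/
def qbinom (X : ℚ) (a b : ℕ) : ℚ :=
  ∏ i ∈ Finset.range b, (1 - X ^ (a - i)) / (1 - X ^ (b - i))

end SphericalSubmoduleCodes

/-! Since `π` is nilpotent, the infimum defining `nmin` is attained, and `π^a • U₁ ≤ U₃`,
`π^b • U₃ ≤ U₂` give `π^(a+b) • U₁ ≤ U₂`. Hence `distMod` is a metric on submodules, and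
`distClass` is its pullback along the injective map `[U] ↦ Ũ`. -/

namespace SphericalSubmoduleCodes

section Nilpotent

variable {R : Type*} [CommRing R] {V : Type*} [AddCommGroup V] [Module R V]
  {π : R}

theorem nmin_le {U₁ U₂ : Submodule R V} {m : ℕ} (h : (π ^ m) • U₁ ≤ U₂) :
    nmin π U₁ U₂ ≤ m :=
  Nat.sInf_le h

theorem pow_nmin_smul_le (hπ : IsNilpotent π) (U₁ U₂ : Submodule R V) :
    (π ^ nmin π U₁ U₂) • U₁ ≤ U₂ := by
  obtain ⟨r, hr⟩ := hπ
  refine Nat.sInf_mem (s := {m : ℕ | (π ^ m) • U₁ ≤ U₂}) ⟨r, ?_⟩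
  rintro _ ⟨x, -, rfl⟩
  simp [hr]

theorem nmin_eq_zero_iff (hπ : IsNilpotent π) {U₁ U₂ : Submodule R V} :
    nmin π U₁ U₂ = 0 ↔ U₁ ≤ U₂ := by
  constructor
  · intro h
    simpa [h] using pow_nmin_smul_le hπ U₁ U₂
  · intro h
    exact Nat.le_zero.mp (nmin_le (by simpa using h))

theorem nmin_le_nmin_add_nmin (hπ : IsNilpotent π) (U₁ U₂ U₃ : Submodule R V) :
    nmin π U₁ U₂ ≤ nmin π U₁ U₃ + nmin π U₃ U₂ := by
  apply nmin_le
  calc (π ^ (nmin π U₁ U₃ + nmin π U₃ U₂)) • U₁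
      = (π ^ nmin π U₃ U₂) • (π ^ nmin π U₁ U₃) • U₁ := by
        rw [smul_smul, ← pow_add, add_comm]
    _ ≤ (π ^ nmin π U₃ U₂) • U₃ := smul_mono_right _ (pow_nmin_smul_le hπ U₁ U₃)
    _ ≤ U₂ := pow_nmin_smul_le hπ U₃ U₂

theorem distMod_comm (U₁ U₂ : Submodule R V) : distMod π U₁ U₂ = distMod π U₂ U₁ :=
  add_comm _ _

theorem distMod_eq_zero_iff (hπ : IsNilpotent π) {U₁ U₂ : Submodule R V} :
    distMod π U₁ U₂ = 0 ↔ U₁ = U₂ := by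
  rw [distMod, Nat.add_eq_zero_iff, nmin_eq_zero_iff hπ, nmin_eq_zero_iff hπ, le_antisymm_iff]

theorem distMod_le_distMod_add_distMod (hπ : IsNilpotent π) (U₁ U₂ U₃ : Submodule R V) :
    distMod π U₁ U₂ ≤ distMod π U₁ U₃ + distMod π U₃ U₂ := by
  have h₁₂ := nmin_le_nmin_add_nmin hπ U₁ U₂ U₃
  have h₂₁ := nmin_le_nmin_add_nmin hπ U₂ U₁ U₃
  simp only [distMod]
  omega

end Nilpotent

theorem distClass_mk {R : Type*} [CommRing R] {V : Type*} [AddCommGroup V] [Module R V]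
    (π : R) (r : ℕ) (U₁ U₂ : Submodule R V) :
    distClass π r ⟦U₁⟧ ⟦U₂⟧ = distMod π (tilde π r U₁) (tilde π r U₂) :=
  rfl

theorem dist_is_metric_general
    {R : Type*} [CommRing R] {V : Type*} [AddCommGroup V] [Module R V]
    (r : ℕ) (π : R) (hπr : π ^ r = 0) :
    ∀ c₁ c₂ c₃ : Quotient (homSetoid (V := V) π r),
      (0 : ℤ) ≤ (distClass π r c₁ c₂ : ℤ) ∧
      (distClass π r c₁ c₂ = 0 ↔ c₁ = c₂) ∧
      distClass π r c₁ c₂ = distClass π r c₂ c₁ ∧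
      distClass π r c₁ c₂ ≤ distClass π r c₁ c₃ + distClass π r c₃ c₂ := by
  have hπ : IsNilpotent π := ⟨r, hπr⟩
  intro c₁ c₂ c₃
  induction c₁, c₂, c₃ using Quotient.inductionOn₃ with | h U₁ U₂ U₃ =>
  refine ⟨Int.natCast_nonneg _, ?_, distMod_comm _ _, distMod_le_distMod_add_distMod hπ _ _ _⟩
  rw [distClass_mk, distMod_eq_zero_iff hπ, Quotient.eq, homSetoid, Setoid.ker_def]

/-- The map `dist : L⁰(V_r) × L⁰(V_r) → ℤ` is a metric on the set of homothety
classes of `R`-submodules of `V_r`. -/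
theorem dist_is_metric
    {R : Type*} [CommRing R] [Fintype R] [IsLocalRing R]
    {V : Type*} [AddCommGroup V] [Module R V]
    (d r : ℕ) (hd : 2 ≤ d) (hr : 1 ≤ r) (b : Module.Basis (Fin d) R V)
    (π : R) (hmax : IsLocalRing.maximalIdeal R = Ideal.span {π})
    (hπr : π ^ r = 0) (hπr' : π ^ (r - 1) ≠ 0) :
    ∀ c₁ c₂ c₃ : Quotient (homSetoid (V := V) π r),
      (0 : ℤ) ≤ (distClass π r c₁ c₂ : ℤ) ∧
      (distClass π r c₁ c₂ = 0 ↔ c₁ = c₂) ∧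
      distClass π r c₁ c₂ = distClass π r c₂ c₁ ∧
      distClass π r c₁ c₂ ≤ distClass π r c₁ c₃ + distClass π r c₃ c₂ :=
  dist_is_metric_general r π hπr

end SphericalSubmoduleCodes
end

section
/- For each ℓ ∈ {0,…,r}: (1) the sphere ∂B_ℓ([V_r]) = {[U] ∈ L⁰(V_r) : dist([U],[V_r]) = ℓ} equals {[U] ∈ L⁰(V_r) : |[U]| = r − ℓ + 1}; (2) the ball B_ℓ([V_r]) = {[U] ∈ L⁰(V_r) : dist([U],[V_r]) ≤ ℓ} equals {[U] ∈ L⁰(V_r) : |[U]| ≥ r − ℓ + 1}. Moreover, the boundary ∂L(V_r) coincides with the sphere ∂B_r([V_r]), i.e. with the set of homothety classes consisting of exactly one submodule. -/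
open Pointwise

namespace SphericalSubmoduleCodes

/-!
Write `W = Ũ` and let `n = min {k : π^k V ⊆ W}`, the distance from `[U]` to `[V] = [Ṽ]`.
Multiplication by `π^m` on the free module `V` has kernel `π^(r-m) V` (coordinatewise, over the
chain ring every element is `π^i u` with `u` a unit), and `Ũ ⊄ πV`. Hence the submodules
homothetic to `U` are exactly the `π^m W` with `0 ≤ m ≤ r - n`, and they are pairwise distinct
because `m` is recovered as `m_{π^m W}`. So the class of `U` has `r - n + 1` elements, which gives
the sphere and ball statements; a boundary submodule is one with `m_U = 0` and `n = r`.
-/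

open IsLocalRing

section ChainRing

variable {R : Type*} [CommRing R] [IsLocalRing R]

structure IsNilpotentUniformizer (π : R) (r : ℕ) : Prop where
  maximalIdeal_eq : maximalIdeal R = Ideal.span {π}
  pow_eq_zero : π ^ r = 0
  pow_pred_ne_zero : π ^ (r - 1) ≠ 0

namespace IsNilpotentUniformizer

variable {π : R} {r : ℕ}

theorem one_le (h : IsNilpotentUniformizer π r) : 1 ≤ r :=
  Nat.one_le_iff_ne_zero.2 fun hr => h.pow_pred_ne_zero (hr ▸ h.pow_eq_zero)

theorem le_of_pow_eq_zero (h : IsNilpotentUniformizer π r) {j : ℕ} (hj : π ^ j = 0) : r ≤ j := by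
  by_contra hjr
  exact h.pow_pred_ne_zero (pow_eq_zero_of_le (by omega) hj)

theorem not_isUnit (h : IsNilpotentUniformizer π r) : ¬ IsUnit π := by
  have hπ : π ∈ maximalIdeal R := h.maximalIdeal_eq ▸ Ideal.mem_span_singleton_self π
  exact (mem_maximalIdeal π).1 hπ

theorem exists_eq_pow_mul_unit (h : IsNilpotentUniformizer π r) (a : R) :
    ∃ (i : ℕ) (u : Rˣ), a = π ^ i * u := by
  classical
  set i := Nat.findGreatest (fun i => π ^ i ∣ a) r
  obtain ⟨y, hy⟩ : π ^ i ∣ a := Nat.findGreatest_spec (P := fun i => π ^ i ∣ a) (Nat.zero_le r)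
    (by rw [pow_zero]; exact one_dvd a)
  by_cases hir : i = r
  · exact ⟨r, 1, by rw [hy, hir, h.pow_eq_zero, zero_mul, zero_mul]⟩
  by_cases hy_unit : IsUnit y
  · exact ⟨i, hy_unit.unit, hy⟩
  obtain ⟨z, hz⟩ : ∃ z, z * π = y := by
    rw [← Ideal.mem_span_singleton', ← h.maximalIdeal_eq]
    exact (mem_maximalIdeal y).2 hy_unit
  have hdvd : π ^ (i + 1) ∣ a := ⟨z, by rw [hy, ← hz, pow_succ]; ring⟩
  have hi_le : i ≤ r := Nat.findGreatest_le r
  have := Nat.le_findGreatest (P := fun i => π ^ i ∣ a) (by omega : i + 1 ≤ r) hdvd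
  omega

theorem pow_dvd_of_pow_mul_eq_zero (h : IsNilpotentUniformizer π r) {m : ℕ} {a : R}
    (ha : π ^ m * a = 0) : π ^ (r - m) ∣ a := by
  obtain ⟨i, u, rfl⟩ := h.exists_eq_pow_mul_unit a
  have hmi : π ^ (m + i) = 0 := by
    rw [← mul_assoc, ← pow_add] at ha
    exact u.mul_left_eq_zero.1 ha
  have := h.le_of_pow_eq_zero hmi
  exact Dvd.dvd.mul_right (pow_dvd_pow π (by omega)) _

end IsNilpotentUniformizer

end ChainRing

section Submodules

variable {R : Type*} [CommRing R] {V : Type*} [AddCommGroup V] [Module R V] {π : R} {r : ℕ}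

theorem pow_smul_top_anti {j k : ℕ} (hjk : j ≤ k) :
    (π ^ k) • (⊤ : Submodule R V) ≤ (π ^ j) • ⊤ := by
  rw [← Nat.add_sub_cancel' hjk, pow_add, ← smul_smul]
  gcongr
  exact le_top

theorem top_not_le_smul_top {ι : Type*} [Nonempty ι] (b : Module.Basis ι R V)
    (hπ : ¬ IsUnit π) : ¬ (⊤ : Submodule R V) ≤ π • ⊤ := by
  intro hle
  obtain ⟨i⟩ := ‹Nonempty ι›
  obtain ⟨y, -, hy⟩ :=
    (Submodule.mem_smul_pointwise_iff_exists _ _ _).1 (hle (Submodule.mem_top (x := b i)))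
  have hcoord : π * b.repr y i = 1 := by simpa using congrArg (fun v => b.repr v i) hy
  exact hπ (IsUnit.of_mul_eq_one _ hcoord)

theorem mExp_le (U : Submodule R V) : mExp π r U ≤ r :=
  csSup_le' (s := {m : ℕ | m ≤ r ∧ U ≤ (π ^ m) • ⊤}) fun _ hm => hm.1

theorem le_mExp {U : Submodule R V} {m : ℕ} (hm : m ≤ r) (hU : U ≤ (π ^ m) • ⊤) :
    m ≤ mExp π r U :=
  le_csSup ⟨r, fun _ hk => hk.1⟩ ⟨hm, hU⟩

theorem le_pow_mExp_smul_top (U : Submodule R V) : U ≤ (π ^ mExp π r U) • ⊤ :=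
  (Nat.sSup_mem ⟨0, Nat.zero_le r, by simp⟩ ⟨r, fun _ hm => hm.1⟩ :
    mExp π r U ∈ {m : ℕ | m ≤ r ∧ U ≤ (π ^ m) • ⊤}).2

theorem mExp_eq_zero {U : Submodule R V} (hU : ¬ U ≤ π • ⊤) : mExp π r U = 0 := by
  by_contra hm
  have hle := pow_smul_top_anti (π := π) (V := V) (Nat.one_le_iff_ne_zero.2 hm)
  rw [pow_one] at hle
  exact hU ((le_pow_mExp_smul_top U).trans hle)

theorem mem_tilde {U : Submodule R V} {x : V} :
    x ∈ tilde π r U ↔ (π ^ mExp π r U) • x ∈ U := Iff.rfl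

theorem tilde_top : tilde π r (⊤ : Submodule R V) = ⊤ := Submodule.comap_top _

theorem tilde_eq_self {U : Submodule R V} (hU : ¬ U ≤ π • ⊤) : tilde π r U = U := by
  ext x
  rw [mem_tilde, mExp_eq_zero hU, pow_zero, one_smul]

theorem pow_mExp_smul_tilde (U : Submodule R V) : (π ^ mExp π r U) • tilde π r U = U := by
  refine le_antisymm ?_ fun u hu => ?_
  · rw [Submodule.pointwise_smul_def, Submodule.map_le_iff_le_comap]
    exact le_rfl
  · obtain ⟨v, -, rfl⟩ := (Submodule.mem_smul_pointwise_iff_exists _ _ _).1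
      (le_pow_mExp_smul_top (π := π) (r := r) U hu)
    exact Submodule.smul_mem_pointwise_smul _ _ _ (mem_tilde.2 hu)

theorem pow_smul_top_le_tilde (hπr : π ^ r = 0) (U : Submodule R V) :
    (π ^ (r - mExp π r U)) • ⊤ ≤ tilde π r U := by
  intro x hx
  obtain ⟨y, -, rfl⟩ := (Submodule.mem_smul_pointwise_iff_exists _ _ _).1 hx
  rw [mem_tilde, smul_smul, ← pow_add, Nat.add_sub_cancel' (mExp_le U), hπr, zero_smul]
  exact U.zero_mem

theorem tilde_not_le_smul_top (hπr : π ^ r = 0) (hV : ¬ (⊤ : Submodule R V) ≤ π • ⊤)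
    (U : Submodule R V) : ¬ tilde π r U ≤ π • ⊤ := by
  intro hle
  rcases (mExp_le (π := π) (r := r) U).lt_or_eq with hlt | heq
  · have hU : U ≤ (π ^ (mExp π r U + 1)) • ⊤ := by
      calc U = (π ^ mExp π r U) • tilde π r U := (pow_mExp_smul_tilde U).symm
        _ ≤ (π ^ mExp π r U) • (π • ⊤) := by gcongr
        _ = (π ^ (mExp π r U + 1)) • ⊤ := by rw [smul_smul, ← pow_succ]
    have := le_mExp (π := π) (r := r) (by omega) hU
    omega
  · have htop := pow_smul_top_le_tilde hπr U
    rw [heq, Nat.sub_self, pow_zero, one_smul] at htop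
    exact hV (htop.trans hle)

theorem nmin_top_right (U : Submodule R V) : nmin π U ⊤ = 0 :=
  Nat.sInf_eq_zero.2 (Or.inl (show (π ^ 0) • U ≤ ⊤ from le_top))

theorem nmin_top_le_of_le {W : Submodule R V} {k : ℕ} (hk : (π ^ k) • ⊤ ≤ W) :
    nmin π ⊤ W ≤ k :=
  Nat.sInf_le hk

theorem pow_smul_top_eq_bot (hπr : π ^ r = 0) : (π ^ r) • (⊤ : Submodule R V) = ⊥ := by
  rw [hπr, zero_smul, Submodule.zero_eq_bot]

theorem nmin_top_le (hπr : π ^ r = 0) (W : Submodule R V) : nmin π ⊤ W ≤ r :=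
  nmin_top_le_of_le ((pow_smul_top_eq_bot hπr).trans_le bot_le)

theorem pow_nmin_smul_top_le (hπr : π ^ r = 0) (W : Submodule R V) :
    (π ^ nmin π ⊤ W) • ⊤ ≤ W :=
  Nat.sInf_mem (s := {m : ℕ | (π ^ m) • ⊤ ≤ W}) ⟨r, (pow_smul_top_eq_bot hπr).trans_le bot_le⟩

theorem distMod_tilde_top (U : Submodule R V) :
    distMod π (tilde π r U) (tilde π r ⊤) = nmin π ⊤ (tilde π r U) := by
  rw [distMod, tilde_top, nmin_top_right, zero_add]

theorem mem_boundary_iff (hr : 1 ≤ r) (hπr : π ^ r = 0) (hV : ¬ (⊤ : Submodule R V) ≤ π • ⊤)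
    (U : Submodule R V) : U ∈ boundary π r ↔ tilde π r U = U ∧ nmin π ⊤ U = r := by
  constructor
  · rintro ⟨hnot_ker, hnot_le⟩
    refine ⟨tilde_eq_self hnot_le, le_antisymm (nmin_top_le hπr U) ?_⟩
    by_contra hlt
    exact hnot_ker ((pow_smul_top_anti (by omega)).trans (pow_nmin_smul_top_le hπr U))
  · rintro ⟨htilde, hn⟩
    refine ⟨fun hle => ?_, fun hle => tilde_not_le_smul_top hπr hV U (by rwa [htilde])⟩
    have := nmin_top_le_of_le hle
    omega

end Submodules

section HomothetyClasses

variable {R : Type*} [CommRing R] [IsLocalRing R] {V : Type*} [AddCommGroup V] [Module R V]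
  {π : R} {r : ℕ} {ι : Type*} [Fintype ι]

theorem IsNilpotentUniformizer.mem_pow_smul_top_of_pow_smul_eq_zero
    (h : IsNilpotentUniformizer π r) (b : Module.Basis ι R V)
    {m : ℕ} {x : V} (hx : (π ^ m) • x = 0) : x ∈ (π ^ (r - m)) • (⊤ : Submodule R V) := by
  rw [← b.sum_repr x]
  refine Submodule.sum_mem _ fun i _ => ?_
  have hcoord : π ^ m * b.repr x i = 0 := by simpa using congrArg (fun v => b.repr v i) hx
  obtain ⟨c, hc⟩ := h.pow_dvd_of_pow_mul_eq_zero hcoord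
  rw [hc, mul_smul]
  exact Submodule.smul_mem_pointwise_smul _ _ _ Submodule.mem_top

theorem IsNilpotentUniformizer.mExp_pow_smul (h : IsNilpotentUniformizer π r)
    (b : Module.Basis ι R V) {W : Submodule R V} (hW : ¬ W ≤ π • ⊤) {m : ℕ} (hm : m ≤ r) :
    mExp π r ((π ^ m) • W) = m := by
  refine le_antisymm ?_ (le_mExp hm (by gcongr; exact le_top))
  by_contra hlt
  have hm_le := mExp_le (π := π) (r := r) ((π ^ m) • W)
  obtain ⟨w, hw, hw_not⟩ := SetLike.not_le_iff_exists.1 hW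
  have hmem : (π ^ m) • w ∈ (π ^ (m + 1)) • (⊤ : Submodule R V) :=
    ((le_pow_mExp_smul_top (r := r) _).trans (pow_smul_top_anti (by omega)))
      (Submodule.smul_mem_pointwise_smul w _ W hw)
  obtain ⟨v, -, hv⟩ := (Submodule.mem_smul_pointwise_iff_exists _ _ _).1 hmem
  have hker : (π ^ m) • (w - π • v) = 0 := by
    rw [smul_sub, smul_smul, ← pow_succ, hv, sub_self]
  have hle : (π ^ (r - m)) • (⊤ : Submodule R V) ≤ π • ⊤ := by
    simpa only [pow_one] using pow_smul_top_anti (π := π) (V := V) (by omega : 1 ≤ r - m)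
  refine hw_not ?_
  rw [← sub_add_cancel w (π • v)]
  exact add_mem (hle (h.mem_pow_smul_top_of_pow_smul_eq_zero b hker))
    (Submodule.smul_mem_pointwise_smul v _ _ Submodule.mem_top)

theorem IsNilpotentUniformizer.tilde_pow_smul (h : IsNilpotentUniformizer π r)
    (b : Module.Basis ι R V) {W : Submodule R V} (hW : ¬ W ≤ π • ⊤) {m : ℕ} (hm : m ≤ r)
    (hker : (π ^ (r - m)) • ⊤ ≤ W) : tilde π r ((π ^ m) • W) = W := by
  ext x
  rw [mem_tilde, h.mExp_pow_smul b hW hm]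
  refine ⟨fun hx => ?_, Submodule.smul_mem_pointwise_smul x _ W⟩
  obtain ⟨w, hw, hwx⟩ := (Submodule.mem_smul_pointwise_iff_exists _ _ _).1 hx
  have hxw : (π ^ m) • (x - w) = 0 := by rw [smul_sub, hwx, sub_self]
  rw [← sub_add_cancel x w]
  exact add_mem (hker (h.mem_pow_smul_top_of_pow_smul_eq_zero b hxw)) hw

theorem IsNilpotentUniformizer.homothetyClass_eq_image [Nonempty ι]
    (h : IsNilpotentUniformizer π r) (b : Module.Basis ι R V) (U : Submodule R V) :
    {U' : Submodule R V | tilde π r U' = tilde π r U} =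
      (fun m => (π ^ m) • tilde π r U) '' Set.Iic (r - nmin π ⊤ (tilde π r U)) := by
  have hW := tilde_not_le_smul_top (U := U) h.pow_eq_zero (top_not_le_smul_top b h.not_isUnit)
  ext U'
  simp only [Set.mem_ofPred_eq, Set.mem_image, Set.mem_Iic]
  constructor
  · intro hU'
    refine ⟨mExp π r U', ?_, by rw [← hU', pow_mExp_smul_tilde]⟩
    have := nmin_top_le_of_le (hU' ▸ pow_smul_top_le_tilde h.pow_eq_zero U')
    have := mExp_le (π := π) (r := r) U'
    omega
  · rintro ⟨m, hm, rfl⟩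
    have hn := nmin_top_le h.pow_eq_zero (tilde π r U)
    exact h.tilde_pow_smul b hW (by omega)
      ((pow_smul_top_anti (by omega)).trans (pow_nmin_smul_top_le h.pow_eq_zero _))

theorem IsNilpotentUniformizer.card_homothetyClass [Nonempty ι]
    (h : IsNilpotentUniformizer π r) (b : Module.Basis ι R V) (U : Submodule R V) :
    Nat.card {U' : Submodule R V | tilde π r U' = tilde π r U} =
      r - nmin π ⊤ (tilde π r U) + 1 := by
  have hW := tilde_not_le_smul_top (U := U) h.pow_eq_zero (top_not_le_smul_top b h.not_isUnit)
  have hinj : Set.InjOn (fun m => (π ^ m) • tilde π r U) (Set.Iic r) := fun m₁ hm₁ m₂ hm₂ heq => by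
    rw [← h.mExp_pow_smul b hW hm₁, ← h.mExp_pow_smul b hW hm₂]
    exact congrArg (mExp π r) heq
  rw [Nat.card_coe_set_eq, h.homothetyClass_eq_image b U,
    (hinj.mono (Set.Iic_subset_Iic.2 (Nat.sub_le _ _))).ncard_image, ← Finset.coe_Iic,
    Set.ncard_coe_finset, Nat.card_Iic]

end HomothetyClasses

theorem sphere_ball_card_general
    {R : Type*} [CommRing R] [IsLocalRing R]
    {V : Type*} [AddCommGroup V] [Module R V]
    (d r : ℕ) (hd : 2 ≤ d) (b : Module.Basis (Fin d) R V)
    (π : R) (hmax : IsLocalRing.maximalIdeal R = Ideal.span {π})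
    (hπr : π ^ r = 0) (hπr' : π ^ (r - 1) ≠ 0) :
    (∀ ℓ : ℕ, ℓ ≤ r → ∀ U : Submodule R V,
      (distMod π (tilde π r U) (tilde π r ⊤) = ℓ ↔
        Nat.card {U' : Submodule R V | tilde π r U' = tilde π r U} = r - ℓ + 1) ∧
      (distMod π (tilde π r U) (tilde π r ⊤) ≤ ℓ ↔
        r - ℓ + 1 ≤ Nat.card {U' : Submodule R V | tilde π r U' = tilde π r U})) ∧
    (∀ U : Submodule R V,
      U ∈ boundary π r ↔ tilde π r U = U ∧ distMod π (tilde π r U) (tilde π r ⊤) = r) := by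
  have : Nonempty (Fin d) := ⟨⟨0, by omega⟩⟩
  have h : IsNilpotentUniformizer π r := ⟨hmax, hπr, hπr'⟩
  refine ⟨fun ℓ hℓ U => ?_, fun U => ?_⟩
  · have := nmin_top_le hπr (tilde π r U)
    rw [distMod_tilde_top, h.card_homothetyClass b U]
    omega
  · rw [mem_boundary_iff h.one_le hπr (top_not_le_smul_top b h.not_isUnit)]
    exact and_congr_right fun htilde => by rw [distMod_tilde_top, htilde]

/-- Spheres and balls of radius `ℓ` around `[V_r]` consist exactly of the homothety
classes of cardinality `= r - ℓ + 1`, resp. `≥ r - ℓ + 1`; moreover the boundary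
`∂L(V_r)` coincides with the sphere of radius `r`, i.e. with the classes consisting
of exactly one submodule. -/
theorem sphere_ball_card
    {R : Type*} [CommRing R] [Fintype R] [IsLocalRing R]
    {V : Type*} [AddCommGroup V] [Module R V]
    (d r : ℕ) (hd : 2 ≤ d) (hr : 1 ≤ r) (b : Module.Basis (Fin d) R V)
    (π : R) (hmax : IsLocalRing.maximalIdeal R = Ideal.span {π})
    (hπr : π ^ r = 0) (hπr' : π ^ (r - 1) ≠ 0) :
    (∀ ℓ : ℕ, ℓ ≤ r → ∀ U : Submodule R V,
      (distMod π (tilde π r U) (tilde π r ⊤) = ℓ ↔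
        Nat.card {U' : Submodule R V | tilde π r U' = tilde π r U} = r - ℓ + 1) ∧
      (distMod π (tilde π r U) (tilde π r ⊤) ≤ ℓ ↔
        r - ℓ + 1 ≤ Nat.card {U' : Submodule R V | tilde π r U' = tilde π r U})) ∧
    (∀ U : Submodule R V,
      U ∈ boundary π r ↔ tilde π r U = U ∧ distMod π (tilde π r U) (tilde π r ⊤) = r) :=
  sphere_ball_card_general d r hd b π hmax hπr hπr'

end SphericalSubmoduleCodes
end

section
/- For homothety classes [U₁],[U₂] ∈ L⁰(V_r), the following are equivalent: (1) dist([U₁],[U₂]) = 2r; (2) both U₁ and U₂ lie in the boundary ∂L(V_r) (for boundary representatives Ũᵢ = Uᵢ), and neither π^{r-1}U₁ nor π^{r-1}U₂ is contained in U₁ ∩ U₂. -/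
/-!
Since `π ^ r` kills `V`, each of the two exponents in the distance is at most `r`, so the
distance is `2r` exactly when both are `r`, i.e. when `π^{r-1} Ũ₁ ⊄ Ũ₂` and `π^{r-1} Ũ₂ ⊄ Ũ₁`.
These two conditions already force the boundary conditions: `π^{r-1} V ⊆ Ũ₁` would give
`π^{r-1} Ũ₂ ⊆ Ũ₁`, and `Ũ₁ ⊆ π V` would give `π^{r-1} Ũ₁ = 0`.
-/

open Pointwise

namespace SphericalSubmoduleCodes

section

variable {R : Type*} [CommRing R] {V : Type*} [AddCommGroup V] [Module R V]
  {π : R} {r : ℕ}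

theorem pow_smul_le_pow_smul_of_le (a : R) {m n : ℕ} (h : m ≤ n) (W : Submodule R V) :
    a ^ n • W ≤ a ^ m • W := by
  rw [← Nat.sub_add_cancel h, pow_add, mul_smul]
  exact Submodule.smul_le_self_of_tower (a ^ (n - m)) (a ^ m • W)

theorem pow_smul_le_of_pow_eq_zero (hπr : π ^ r = 0) (W W' : Submodule R V) :
    π ^ r • W ≤ W' := by
  rw [hπr, zero_smul]
  exact bot_le

theorem nmin_le_of_pow_eq_zero (hπr : π ^ r = 0) (W W' : Submodule R V) : nmin π W W' ≤ r :=
  Nat.sInf_le (pow_smul_le_of_pow_eq_zero hπr W W')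

theorem nmin_eq_iff_not_pow_pred_smul_le (hr : 1 ≤ r) (hπr : π ^ r = 0)
    (W W' : Submodule R V) :
    nmin π W W' = r ↔ ¬ π ^ (r - 1) • W ≤ W' := by
  obtain ⟨k, rfl⟩ : ∃ k, r = k + 1 := ⟨r - 1, by omega⟩
  have upward_closed (m n : ℕ) (hmn : m ≤ n) (hm : m ∈ {j : ℕ | π ^ j • W ≤ W'}) :
      n ∈ {j : ℕ | π ^ j • W ≤ W'} :=
    (pow_smul_le_pow_smul_of_le π hmn W).trans hm
  rw [nmin, Nat.sInf_upward_closed_eq_succ_iff upward_closed, Nat.add_sub_cancel]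
  exact and_iff_right (pow_smul_le_of_pow_eq_zero hπr W W')

theorem distMod_eq_two_mul_iff (hr : 1 ≤ r) (hπr : π ^ r = 0) (W W' : Submodule R V) :
    distMod π W W' = 2 * r ↔ ¬ π ^ (r - 1) • W ≤ W' ∧ ¬ π ^ (r - 1) • W' ≤ W := by
  rw [← nmin_eq_iff_not_pow_pred_smul_le hr hπr, ← nmin_eq_iff_not_pow_pred_smul_le hr hπr]
  have := nmin_le_of_pow_eq_zero hπr W W'
  have := nmin_le_of_pow_eq_zero hπr W' W
  unfold distMod
  omega

theorem pow_pred_smul_le_of_le_smul_top (hr : 1 ≤ r) (hπr : π ^ r = 0)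
    {W : Submodule R V} (hW : W ≤ π • ⊤) (W' : Submodule R V) :
    π ^ (r - 1) • W ≤ W' :=
  calc π ^ (r - 1) • W ≤ π ^ (r - 1) • π • ⊤ := smul_le_smul_left _ hW
    _ = π ^ r • ⊤ := by rw [smul_smul, pow_sub_one_mul (by omega)]
    _ ≤ W' := pow_smul_le_of_pow_eq_zero hπr ⊤ W'

theorem mem_boundary_of_not_pow_pred_smul_le (hr : 1 ≤ r) (hπr : π ^ r = 0)
    {W W' : Submodule R V} (h : ¬ π ^ (r - 1) • W ≤ W') (h' : ¬ π ^ (r - 1) • W' ≤ W) :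
    W ∈ boundary π r :=
  ⟨fun hW => h' ((smul_le_smul_left _ le_top).trans hW),
    fun hW => h (pow_pred_smul_le_of_le_smul_top hr hπr hW W')⟩

theorem smul_le_self_inf_iff (a : R) (W W' : Submodule R V) : a • W ≤ W ⊓ W' ↔ a • W ≤ W' :=
  le_inf_iff.trans (and_iff_right (Submodule.smul_le_self_of_tower a W))

end

theorem dist_eq_two_r_iff_general
    {R : Type*} [CommRing R]
    {V : Type*} [AddCommGroup V] [Module R V]
    (r : ℕ) (hr : 1 ≤ r)
    (π : R)
    (hπr : π ^ r = 0)
    (U₁ U₂ : Submodule R V) :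
    distMod π (tilde π r U₁) (tilde π r U₂) = 2 * r ↔
      (tilde π r U₁ ∈ boundary π r ∧ tilde π r U₂ ∈ boundary π r ∧
        ¬ ((π ^ (r - 1)) • tilde π r U₁ ≤ tilde π r U₁ ⊓ tilde π r U₂) ∧
        ¬ ((π ^ (r - 1)) • tilde π r U₂ ≤ tilde π r U₁ ⊓ tilde π r U₂)) := by
  rw [distMod_eq_two_mul_iff hr hπr, smul_le_self_inf_iff, inf_comm, smul_le_self_inf_iff]
  constructor
  · rintro ⟨h₁, h₂⟩
    exact ⟨mem_boundary_of_not_pow_pred_smul_le hr hπr h₁ h₂,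
      mem_boundary_of_not_pow_pred_smul_le hr hπr h₂ h₁, h₁, h₂⟩
  · rintro ⟨-, -, h₁, h₂⟩
    exact ⟨h₁, h₂⟩

/-- For homothety classes `[U₁], [U₂] ∈ L⁰(V_r)` (with maximal representatives
`Ũ₁, Ũ₂`): `dist([U₁],[U₂]) = 2r` iff both representatives lie in the boundary
`∂L(V_r)` and neither `π^{r-1} Ũ₁` nor `π^{r-1} Ũ₂` is contained in `Ũ₁ ∩ Ũ₂`. -/
theorem dist_eq_two_r_iff
    {R : Type*} [CommRing R] [Fintype R] [IsLocalRing R]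
    {V : Type*} [AddCommGroup V] [Module R V]
    (d r : ℕ) (hd : 2 ≤ d) (hr : 1 ≤ r) (b : Module.Basis (Fin d) R V)
    (π : R) (hmax : IsLocalRing.maximalIdeal R = Ideal.span {π})
    (hπr : π ^ r = 0) (hπr' : π ^ (r - 1) ≠ 0)
    (U₁ U₂ : Submodule R V) :
    distMod π (tilde π r U₁) (tilde π r U₂) = 2 * r ↔
      (tilde π r U₁ ∈ boundary π r ∧ tilde π r U₂ ∈ boundary π r ∧
        ¬ ((π ^ (r - 1)) • tilde π r U₁ ≤ tilde π r U₁ ⊓ tilde π r U₂) ∧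
        ¬ ((π ^ (r - 1)) • tilde π r U₂ ≤ tilde π r U₁ ⊓ tilde π r U₂)) :=
  dist_eq_two_r_iff_general r hr π hπr U₁ U₂

end SphericalSubmoduleCodes
end

section
/- For each n ∈ {1,…,d−1}, the number of free R-submodules of V_r of rank n is |Gr(n,V_r)| = binom(d,n)_{q^{-1}} · q^{rn(d−n)}, where binom(a,b)_X = ∏_{i=0}^{b-1} (1−X^{a−i})/(1−X^{b−i}). In particular |Gr(n,V_r)| = |Gr(d−n,V_r)|. -/
open Pointwise

/-!
A linearly independent `n`-tuple in `R^d` spans a point `U ≅ R^n` of `Gr(n, R^d)`, and since `R` is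
finite, the tuples spanning a given `U` are exactly the linearly independent `n`-tuples of `U`
(an injective linear map `R^n → U` is bijective by counting). Hence
`|Gr(n, R^d)| · |LI_n(R^n)| = |LI_n(R^d)|`. Over an Artinian local ring a tuple is linearly
independent exactly when its reduction to the residue field `k` is (one direction by flatness, the
other by multiplying a relation with a nonzero element killed by `𝔪`), so `LI_m(R^N)` is the full
preimage of `LI_m(k^N)` under reduction and `|LI_m(R^N)| = |R|^{mN} ∏_{i<m} (1 - q^{-(N-i)})`.
The quotient is `binom(d,n)_{q⁻¹} |R|^{n(d-n)}`, and for a chain ring `|R| = q^r` because each layer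
`π^s R / π^{s+1} R` is isomorphic to `k`.
-/

open IsLocalRing

theorem AddMonoidHom.card_preimage_eq_mul_card_ker {G H : Type*} [AddGroup G] [AddGroup H]
    [Finite G] {f : G →+ H} (hf : Function.Surjective f) (S : Set H) :
    Nat.card (f ⁻¹' S) = Nat.card S * Nat.card f.ker := by
  have : Finite H := Finite.of_surjective f hf
  lift S to Finset H using S.toFinite
  rw [Finset.card_preimage_eq_sum_card_image_eq fun _ _ => Set.toFinite _, Nat.card_coe_set_eq,
    Set.ncard_coe_finset]
  exact Finset.sum_const_nat fun b _ => Nat.card_congr (fiberEquivKerOfSurjective hf b)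

theorem AddMonoidHom.card_preimage_mul_card_eq {G H : Type*} [AddGroup G] [AddGroup H]
    [Finite G] {f : G →+ H} (hf : Function.Surjective f) (S : Set H) :
    Nat.card (f ⁻¹' S) * Nat.card H = Nat.card S * Nat.card G := by
  have hG := card_preimage_eq_mul_card_ker hf Set.univ
  rw [Set.preimage_univ, Nat.card_univ, Nat.card_univ] at hG
  rw [card_preimage_eq_mul_card_ker hf, hG]
  ring

theorem Nat.cast_prod_range_pow_sub_pow {q : ℕ} (hq : q ≠ 0) {m N : ℕ} (hmN : m ≤ N) :
    ((∏ i ∈ Finset.range m, (q ^ N - q ^ i) : ℕ) : ℚ) =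
      (q : ℚ) ^ (m * N) * ∏ i ∈ Finset.range m, (1 - (q : ℚ)⁻¹ ^ (N - i)) := by
  have hpow : (q : ℚ) ^ (m * N) = ∏ _i ∈ Finset.range m, (q : ℚ) ^ N := by
    rw [Finset.prod_const, Finset.card_range, ← pow_mul, mul_comm]
  rw [hpow, ← Finset.prod_mul_distrib, Nat.cast_prod]
  refine Finset.prod_congr rfl fun i hi => ?_
  have hiN : i ≤ N := (Finset.mem_range.mp hi).le.trans hmN
  rw [Nat.cast_sub (Nat.pow_le_pow_right (Nat.pos_of_ne_zero hq) hiN), mul_sub, mul_one, inv_pow,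
    ← pow_sub₀ _ (Nat.cast_ne_zero.mpr hq) (Nat.sub_le N i), Nat.sub_sub_self hiN, Nat.cast_pow,
    Nat.cast_pow]

section LocalRing

variable {R : Type*} [CommRing R] [IsLocalRing R]

instance [Finite R] : Finite (ResidueField R) := Finite.of_surjective _ residue_surjective

theorem IsLocalRing.inv_card_residueField_lt_one [Finite R] :
    (Nat.card (ResidueField R) : ℚ)⁻¹ < 1 :=
  inv_lt_one_of_one_lt₀ (by exact_mod_cast Finite.one_lt_card)

theorem IsLocalRing.exists_ne_zero_mul_eq_zero_of_mem_maximalIdeal [IsArtinianRing R] :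
    ∃ s : R, s ≠ 0 ∧ ∀ x ∈ maximalIdeal R, s * x = 0 := by
  obtain ⟨P, hP⟩ := associatedPrimes.nonempty R R
  obtain ⟨hPrime, s, hs⟩ := isAssociatedPrime_iff.mp hP
  obtain rfl : P = maximalIdeal R := eq_maximalIdeal (IsArtinianRing.isMaximal_of_isPrime P)
  refine ⟨s, ?_, fun x hx => ?_⟩
  · rintro rfl
    exact hPrime.ne_top (by simp [hs])
  · rw [hs, Submodule.mem_colon_singleton] at hx
    simpa [mul_comm] using hx

theorem IsLocalRing.linearIndependent_of_residue {ι κ : Type*} [Fintype κ] [DecidableEq κ]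
    {v : ι → κ → R} (hv : LinearIndependent (ResidueField R) fun i => residue R ∘ v i) :
    LinearIndependent R v := by
  apply Module.IsLocalRing.linearIndependent_of_flat
  let e := TensorProduct.piScalarRight R (ResidueField R) (ResidueField R) κ
  have hred : e.toLinearMap ∘ (TensorProduct.mk R (ResidueField R) (κ → R) 1 ∘ v) =
      fun i => residue R ∘ v i := by
    ext i j
    simp [e, Algebra.smul_def]
  rwa [← LinearMap.linearIndependent_iff e.toLinearMap e.ker, hred]

theorem LinearIndependent.residue [IsArtinianRing R] {ι κ : Type*} [Fintype ι] {v : ι → κ → R}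
    (hv : LinearIndependent R v) :
    LinearIndependent (ResidueField R) fun i => IsLocalRing.residue R ∘ v i := by
  obtain ⟨s, hs0, hs⟩ := exists_ne_zero_mul_eq_zero_of_mem_maximalIdeal (R := R)
  rw [Fintype.linearIndependent_iff] at hv ⊢
  intro g hg i
  choose a ha using fun i => residue_surjective (g i)
  have hmem (j : κ) : (∑ i, a i • v i) j ∈ maximalIdeal R := by
    have := congrFun hg j
    simp only [← ha, Finset.sum_apply, Pi.smul_apply, Function.comp_apply, smul_eq_mul,
      Pi.zero_apply] at this
    rw [← residue_eq_zero_iff]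
    simpa [map_sum] using this
  have hsa : ∀ i, s * a i = 0 := hv _ <| by
    funext j
    simpa [mul_assoc, Finset.mul_sum] using hs _ (hmem j)
  rw [← ha i, residue_eq_zero_iff]
  by_contra hu
  exact hs0 (by simpa using ((notMem_maximalIdeal.mp hu).mul_left_eq_zero).mp (hsa i))

theorem IsLocalRing.card_linearIndependent_pi_mul [Finite R] {m N : ℕ} (hmN : m ≤ N) :
    Nat.card {v : Fin m → Fin N → R // LinearIndependent R v} *
        Nat.card (ResidueField R) ^ (m * N) =
      (∏ i ∈ Finset.range m, (Nat.card (ResidueField R) ^ N - Nat.card (ResidueField R) ^ i)) *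
        Nat.card R ^ (m * N) := by
  classical
  have : Fintype (ResidueField R) := Fintype.ofFinite _
  let ρ : (Fin m → Fin N → R) →+ (Fin m → Fin N → ResidueField R) :=
    AddMonoidHom.compLeft (AddMonoidHom.compLeft (residue R).toAddMonoidHom (Fin N)) (Fin m)
  have hLI : {v : Fin m → Fin N → R | LinearIndependent R v} =
      ρ ⁻¹' {w | LinearIndependent (ResidueField R) w} :=
    Set.ext fun _ => ⟨LinearIndependent.residue, linearIndependent_of_residue⟩
  have hρ : Function.Surjective ρ := residue_surjective.comp_left.comp_left
  have hcount :=
    AddMonoidHom.card_preimage_mul_card_eq hρ {w | LinearIndependent (ResidueField R) w}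
  rw [← hLI, Set.coe_ofPred, Set.coe_ofPred, card_linearIndependent (by simpa using hmN)] at hcount
  simpa only [← Nat.card_eq_fintype_card, Nat.card_fun, Nat.card_fin, Module.finrank_fin_fun,
    ← pow_mul', Finset.prod_range] using hcount

theorem IsLocalRing.card_linearIndependent_pi [Finite R] {m N : ℕ} (hmN : m ≤ N) :
    (Nat.card {v : Fin m → Fin N → R // LinearIndependent R v} : ℚ) =
      Nat.card R ^ (m * N) *
        ∏ i ∈ Finset.range m, (1 - (Nat.card (ResidueField R) : ℚ)⁻¹ ^ (N - i)) := by
  have hq : Nat.card (ResidueField R) ≠ 0 := Nat.card_pos.ne'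
  have hcount := congrArg (Nat.cast : ℕ → ℚ) (card_linearIndependent_pi_mul (R := R) hmN)
  rw [Nat.cast_mul, Nat.cast_mul, Nat.cast_prod_range_pow_sub_pow hq hmN] at hcount
  push_cast at hcount
  apply mul_right_cancel₀ (pow_ne_zero (m * N) (Nat.cast_ne_zero.mpr hq))
  rw [hcount]
  ring

end LocalRing

section ChainRing

variable {R : Type*} [CommRing R] [IsLocalRing R] {π : R}

theorem IsLocalRing.mul_pow_mem_span_pow_succ_iff (hmax : maximalIdeal R = Ideal.span {π})
    {s : ℕ} (hs : π ^ s ≠ 0) {x : R} :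
    x * π ^ s ∈ Ideal.span {π ^ (s + 1)} ↔ x ∈ maximalIdeal R := by
  rw [Ideal.mem_span_singleton']
  constructor
  · rintro ⟨c, hc⟩
    have hxc : x - c * π ∈ maximalIdeal R := fun hu =>
      hs <| hu.mul_right_eq_zero.mp <| by rw [sub_mul, ← hc]; ring
    have hc : c * π ∈ maximalIdeal R :=
      hmax ▸ Ideal.mul_mem_left _ c (Ideal.mem_span_singleton_self π)
    simpa using add_mem hxc hc
  · intro hx
    obtain ⟨c, rfl⟩ := Ideal.mem_span_singleton'.mp (hmax ▸ hx)
    exact ⟨c, by ring⟩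

theorem IsLocalRing.card_span_pow_eq (hmax : maximalIdeal R = Ideal.span {π}) {s : ℕ}
    (hs : π ^ s ≠ 0) :
    Nat.card (Ideal.span {π ^ s}) =
      Nat.card (ResidueField R) * Nat.card (Ideal.span {π ^ (s + 1)}) := by
  set I : Ideal R := Ideal.span {π ^ s}
  set N : Submodule R I := Submodule.comap I.subtype (Ideal.span {π ^ (s + 1)})
  let f : R →ₗ[R] I ⧸ N := N.mkQ ∘ₗ (LinearMap.toSpanSingleton R R (π ^ s)).codRestrict I
    fun c => Ideal.mul_mem_left _ c (Ideal.subset_span rfl)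
  have hf : Function.Surjective f := by
    refine N.mkQ_surjective.comp fun y => ?_
    obtain ⟨c, hc⟩ := Ideal.mem_span_singleton'.mp y.2
    exact ⟨c, Subtype.ext hc⟩
  have hker : LinearMap.ker f = maximalIdeal R := by
    ext x
    simp only [f, LinearMap.mem_ker, LinearMap.coe_comp, Function.comp_apply, Submodule.mkQ_apply,
      Submodule.Quotient.mk_eq_zero, N, Submodule.mem_comap, Submodule.subtype_apply]
    exact mul_pow_mem_span_pow_succ_iff hmax hs
  rw [Submodule.card_eq_card_quotient_mul_card N, mul_comm,
    ← Nat.card_congr (hker ▸ f.quotKerEquivOfSurjective hf).toEquiv,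
    Nat.card_congr (Submodule.comapSubtypeEquivOfLe (Ideal.span_singleton_le_span_singleton.mpr
      (pow_dvd_pow π s.le_succ))).toEquiv]
  rfl

theorem IsLocalRing.card_eq_card_residueField_pow [Finite R]
    (hmax : maximalIdeal R = Ideal.span {π}) {r : ℕ} (hπr : π ^ r = 0) (hπr' : π ^ (r - 1) ≠ 0) :
    Nat.card R = Nat.card (ResidueField R) ^ r := by
  have key (s : ℕ) (hs : s ≤ r) :
      Nat.card R = Nat.card (ResidueField R) ^ s * Nat.card (Ideal.span {π ^ s}) := by
    induction s with
    | zero => simp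
    | succ s ih =>
      rw [ih (by omega), card_span_pow_eq hmax fun h => hπr' (pow_eq_zero_of_le (by omega) h)]
      ring
  simpa [hπr] using key r le_rfl

end ChainRing

section QBinomial

open Finset

/-- The `q`-Pochhammer symbol `(X; X)_m`. -/
def qPochhammer {K : Type*} [CommRing K] (X : K) (m : ℕ) : K :=
  ∏ j ∈ range m, (1 - X ^ (j + 1))

theorem prod_range_one_sub_pow_mul_qPochhammer {K : Type*} [CommRing K] (X : K) {m N : ℕ}
    (hmN : m ≤ N) :
    (∏ i ∈ range m, (1 - X ^ (N - i))) * qPochhammer X (N - m) = qPochhammer X N := by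
  obtain ⟨k, rfl⟩ := Nat.exists_eq_add_of_le' hmN
  rw [Nat.add_sub_cancel, qPochhammer, qPochhammer, prod_range_add, mul_comm,
    ← prod_range_reflect (fun i => 1 - X ^ (k + m - i))]
  congr 1
  refine prod_congr rfl fun i hi => ?_
  have := mem_range.mp hi
  congr 2
  omega

theorem qPochhammer_eq_prod_range {K : Type*} [CommRing K] (X : K) (n : ℕ) :
    qPochhammer X n = ∏ i ∈ range n, (1 - X ^ (n - i)) := by
  simpa [qPochhammer] using (prod_range_one_sub_pow_mul_qPochhammer X le_rfl (N := n)).symm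

theorem qPochhammer_ne_zero {X : ℚ} (hX₀ : 0 ≤ X) (hX₁ : X < 1) (m : ℕ) : qPochhammer X m ≠ 0 :=
  prod_ne_zero_iff.mpr fun j _ => sub_ne_zero.mpr (pow_lt_one₀ hX₀ hX₁ j.succ_ne_zero).ne'

namespace SphericalSubmoduleCodes

theorem qbinom_mul_qPochhammer {X : ℚ} (hX₀ : 0 ≤ X) (hX₁ : X < 1) (d n : ℕ) :
    qbinom X d n * qPochhammer X n = ∏ i ∈ range n, (1 - X ^ (d - i)) := by
  rw [qbinom, prod_div_distrib, qPochhammer_eq_prod_range,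
    div_mul_cancel₀ _ (qPochhammer_eq_prod_range X n ▸ qPochhammer_ne_zero hX₀ hX₁ n)]

theorem qbinom_eq_div {X : ℚ} (hX₀ : 0 ≤ X) (hX₁ : X < 1) {d n : ℕ} (hnd : n ≤ d) :
    qbinom X d n = qPochhammer X d / (qPochhammer X n * qPochhammer X (d - n)) := by
  rw [eq_div_iff (mul_ne_zero (qPochhammer_ne_zero hX₀ hX₁ n) (qPochhammer_ne_zero hX₀ hX₁ _)),
    ← mul_assoc, qbinom_mul_qPochhammer hX₀ hX₁, prod_range_one_sub_pow_mul_qPochhammer X hnd]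

theorem qbinom_sub {X : ℚ} (hX₀ : 0 ≤ X) (hX₁ : X < 1) {d n : ℕ} (hnd : n ≤ d) :
    qbinom X d (d - n) = qbinom X d n := by
  rw [qbinom_eq_div hX₀ hX₁ hnd, qbinom_eq_div hX₀ hX₁ (Nat.sub_le d n), Nat.sub_sub_self hnd,
    mul_comm]

end SphericalSubmoduleCodes

end QBinomial

section Grassmannian

variable {R : Type*} [CommRing R] {V : Type*} [AddCommGroup V] [Module R V]

def LinearEquiv.linearIndependentEquiv {ι M M' : Type*} [AddCommGroup M] [Module R M]
    [AddCommGroup M'] [Module R M'] (e : M ≃ₗ[R] M') :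
    {u : ι → M // LinearIndependent R u} ≃ {u : ι → M' // LinearIndependent R u} :=
  (Equiv.piCongrRight fun _ => e.toEquiv).subtypeEquiv fun _ =>
    (LinearMap.linearIndependent_iff e.toLinearMap e.ker).symm

theorem Module.Basis.span_eq_top_of_linearIndependent [Finite R] {n : ℕ}
    (b : Module.Basis (Fin n) R V) {u : Fin n → V} (hu : LinearIndependent R u) :
    Submodule.span R (Set.range u) = ⊤ := by
  rw [← Fintype.range_linearCombination, LinearMap.range_eq_top]
  exact (Finite.injective_iff_surjective_of_equiv b.equivFun.symm.toEquiv).mp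
    (linearIndependent_iff_injective_fintypeLinearCombination.mp hu)

namespace SphericalSubmoduleCodes

variable [Nontrivial R] {n : ℕ}

noncomputable def Grass.basis [Finite V] (U : Grass (V := V) R n) : Module.Basis (Fin n) R U :=
  have : Module.Free R U := U.2.1
  (Module.finBasis R U).reindex (finCongr U.2.2)

def spanGrass (v : {v : Fin n → V // LinearIndependent R v}) : Grass (V := V) R n :=
  ⟨Submodule.span R (Set.range v.1), Module.Free.of_basis (Module.Basis.span v.2),
    by rw [finrank_span_eq_card v.2, Fintype.card_fin]⟩

def spanGrassFiberEquiv [Finite R] [Finite V] (U : Grass (V := V) R n) :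
    {v // spanGrass v = U} ≃ {u : Fin n → U.1 // LinearIndependent R u} :=
  have mem (v : {v // spanGrass v = U}) (i : Fin n) : v.1.1 i ∈ U.1 :=
    congrArg Subtype.val v.2 ▸ Submodule.subset_span ⟨i, rfl⟩
  { toFun := fun v => ⟨fun i => ⟨v.1.1 i, mem v i⟩, LinearIndependent.of_comp U.1.subtype v.1.2⟩
    invFun := fun u => ⟨⟨U.1.subtype ∘ u.1, u.2.map' _ U.1.ker_subtype⟩, Subtype.ext <| by
      simp only [spanGrass, Set.range_comp, Submodule.span_image, Submodule.map_top,
        (Grass.basis U).span_eq_top_of_linearIndependent u.2, Submodule.range_subtype]⟩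
    left_inv := fun _ => rfl
    right_inv := fun _ => rfl }

theorem card_grass_mul_card_linearIndependent [Finite R] [Finite V] :
    Nat.card (Grass (V := V) R n) * Nat.card {u : Fin n → Fin n → R // LinearIndependent R u} =
      Nat.card {v : Fin n → V // LinearIndependent R v} := by
  let e := (Equiv.sigmaFiberEquiv spanGrass).symm.trans <|
    (Equiv.sigmaCongrRight fun U : Grass (V := V) R n =>
      (spanGrassFiberEquiv U).trans (Grass.basis U).equivFun.linearIndependentEquiv).trans
    (Equiv.sigmaEquivProd _ _)
  rw [← Nat.card_prod, Nat.card_congr e]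

end SphericalSubmoduleCodes

end Grassmannian

namespace SphericalSubmoduleCodes

variable {R : Type*} [CommRing R] [IsLocalRing R] [Finite R] {V : Type*} [AddCommGroup V]
  [Module R V] {d n : ℕ}

theorem card_grass_eq_qbinom (b : Module.Basis (Fin d) R V) (hnd : n ≤ d) :
    (Nat.card (Grass (V := V) R n) : ℚ) =
      qbinom (Nat.card (ResidueField R) : ℚ)⁻¹ d n * Nat.card R ^ (n * (d - n)) := by
  have : Module.Finite R V := Module.Finite.of_basis b
  have : Finite V := Module.finite_of_finite R
  have hX₀ : (0 : ℚ) ≤ (Nat.card (ResidueField R) : ℚ)⁻¹ := by positivity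
  have hX₁ := inv_card_residueField_lt_one (R := R)
  have hcount := card_grass_mul_card_linearIndependent (R := R) (V := V) (n := n)
  rw [Nat.card_congr b.equivFun.linearIndependentEquiv] at hcount
  have hcountQ := congrArg (Nat.cast : ℕ → ℚ) hcount
  push_cast at hcountQ
  rw [card_linearIndependent_pi le_rfl, card_linearIndependent_pi hnd,
    ← qPochhammer_eq_prod_range, ← qbinom_mul_qPochhammer hX₀ hX₁ d] at hcountQ
  have hpow : (Nat.card R : ℚ) ^ (n * d) = Nat.card R ^ (n * n) * Nat.card R ^ (n * (d - n)) := by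
    rw [← pow_add, ← Nat.mul_add, Nat.add_sub_cancel' hnd]
  apply mul_right_cancel₀ <| mul_ne_zero
    (pow_ne_zero (n * n) (Nat.cast_ne_zero.mpr (Nat.card_pos (α := R)).ne'))
    (qPochhammer_ne_zero hX₀ hX₁ n)
  rw [hcountQ, hpow]
  ring

theorem card_grass_sub (b : Module.Basis (Fin d) R V) (hnd : n ≤ d) :
    Nat.card (Grass (V := V) R (d - n)) = Nat.card (Grass (V := V) R n) := by
  have hcard : (Nat.card (Grass (V := V) R (d - n)) : ℚ) = Nat.card (Grass (V := V) R n) := by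
    rw [card_grass_eq_qbinom b (Nat.sub_le d n), card_grass_eq_qbinom b hnd, Nat.sub_sub_self hnd,
      qbinom_sub (by positivity) inv_card_residueField_lt_one hnd, mul_comm n]
  exact_mod_cast hcard

end SphericalSubmoduleCodes

namespace SphericalSubmoduleCodes

theorem card_grassmannian_general
    {R : Type*} [CommRing R] [Fintype R] [IsLocalRing R]
    {V : Type*} [AddCommGroup V] [Module R V]
    (d r : ℕ) (b : Module.Basis (Fin d) R V)
    (π : R) (hmax : IsLocalRing.maximalIdeal R = Ideal.span {π})
    (hπr : π ^ r = 0) (hπr' : π ^ (r - 1) ≠ 0)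
    (q : ℕ) (hq : q = Nat.card (R ⧸ IsLocalRing.maximalIdeal R))
    (n : ℕ) (hnd : n ≤ d - 1) :
    (Nat.card (Grass (V := V) R n) : ℚ) =
      qbinom (q : ℚ)⁻¹ d n * (q : ℚ) ^ (r * n * (d - n)) ∧
    Nat.card (Grass (V := V) R n) = Nat.card (Grass (V := V) R (d - n)) := by
  subst hq
  refine ⟨?_, (card_grass_sub b (by omega)).symm⟩
  rw [card_grass_eq_qbinom b (by omega), card_eq_card_residueField_pow hmax hπr hπr']
  push_cast
  rw [← pow_mul, mul_assoc]
  -- `ResidueField R` is by definition `R ⧸ maximalIdeal R`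
  rfl

/-- `|Gr(n,V_r)| = binom(d,n)_{q⁻¹} · q^{r n (d-n)}`, and in particular
`|Gr(n,V_r)| = |Gr(d-n,V_r)|`. -/
theorem card_grassmannian
    {R : Type*} [CommRing R] [Fintype R] [IsLocalRing R]
    {V : Type*} [AddCommGroup V] [Module R V]
    (d r : ℕ) (hd : 2 ≤ d) (hr : 1 ≤ r) (b : Module.Basis (Fin d) R V)
    (π : R) (hmax : IsLocalRing.maximalIdeal R = Ideal.span {π})
    (hπr : π ^ r = 0) (hπr' : π ^ (r - 1) ≠ 0)
    (q : ℕ) (hq : q = Nat.card (R ⧸ IsLocalRing.maximalIdeal R))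
    (n : ℕ) (hn : 1 ≤ n) (hnd : n ≤ d - 1) :
    (Nat.card (Grass (V := V) R n) : ℚ) =
      qbinom (q : ℚ)⁻¹ d n * (q : ℚ) ^ (r * n * (d - n)) ∧
    Nat.card (Grass (V := V) R n) = Nat.card (Grass (V := V) R (d - n)) :=
  card_grassmannian_general d r b π hmax hπr hπr' q hq n hnd

end SphericalSubmoduleCodes
end

section
/- Assume d = 2 and let 1 ≤ α ≤ r be an integer. Then card(2;R;2α) = (q+1)q^{r−α}; that is, the maximal cardinality of a spherical code in V_r of minimum distance at least 2α equals (q+1)q^{r−α}. -/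
/-!
Over a chain ring every boundary submodule of `R²` is a line spanned by `[1 : a]` or `[π b : 1]`,
and the distance between two such lines is `2 (r - v)`, where `v` is the `π`-adic valuation of the
determinant of their generators. Hence minimum distance `≥ 2α` says exactly that the lines stay
distinct in the projective line over `R ⧸ π ^ (r - α + 1)`, which has `q ^ (r - α + 1) + q ^ (r - α)`
points: reducing a code there is injective, and one line through each point is a code.
-/

open Pointwise

namespace SphericalSubmoduleCodes

open Submodule

section ChainRing

variable {R : Type*} [CommRing R] [IsLocalRing R]

structure IsChainUniformizer (π : R) (r : ℕ) : Prop where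
  maximalIdeal_eq : IsLocalRing.maximalIdeal R = Ideal.span {π}
  pow_eq_zero : π ^ r = 0
  pow_pred_ne_zero : π ^ (r - 1) ≠ 0

namespace IsChainUniformizer

variable {π : R} {r : ℕ} (hπ : IsChainUniformizer π r)
include hπ

theorem dvd_of_not_isUnit {a : R} (ha : ¬IsUnit a) : π ∣ a := by
  rw [← Ideal.mem_span_singleton, ← hπ.maximalIdeal_eq]
  exact ha

theorem not_isUnit : ¬IsUnit π :=
  (IsLocalRing.mem_maximalIdeal π).mp (hπ.maximalIdeal_eq ▸ Ideal.mem_span_singleton_self π)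

theorem not_dvd_one_sub_mul (c : R) : ¬π ∣ 1 - π * c := fun h =>
  hπ.not_isUnit (isUnit_of_dvd_one (by simpa using dvd_add h (dvd_mul_right π c)))

theorem pow_eq_zero_iff {k : ℕ} : π ^ k = 0 ↔ r ≤ k := by
  refine ⟨fun hk => ?_, fun hk => ?_⟩
  · by_contra! hkr
    exact hπ.pow_pred_ne_zero (pow_eq_zero_of_le (by omega) hk)
  · exact pow_eq_zero_of_le hk hπ.pow_eq_zero

theorem exists_isUnit_mul_pow (a : R) : ∃ u k, IsUnit u ∧ a = u * π ^ k := by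
  by_cases ha : a = 0
  · exact ⟨1, r, isUnit_one, by rw [ha, hπ.pow_eq_zero, mul_zero]⟩
  have hfin : FiniteMultiplicity π a := FiniteMultiplicity.def.mpr
    ⟨r, by rwa [pow_succ, hπ.pow_eq_zero, zero_mul, zero_dvd_iff]⟩
  obtain ⟨u, hau, hu⟩ := hfin.exists_eq_pow_mul_and_not_dvd
  exact ⟨u, _, not_not.mp (mt hπ.dvd_of_not_isUnit hu), by rw [hau, mul_comm]⟩

theorem pow_mul_eq_zero_iff {j : ℕ} (hj : j ≤ r) {a : R} :
    π ^ j * a = 0 ↔ π ^ (r - j) ∣ a := by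
  refine ⟨fun h => ?_, fun ⟨c, hc⟩ => ?_⟩
  · obtain ⟨u, k, hu, rfl⟩ := hπ.exists_isUnit_mul_pow a
    rw [mul_left_comm, hu.mul_right_eq_zero, ← pow_add, hπ.pow_eq_zero_iff] at h
    exact dvd_mul_of_dvd_right (pow_dvd_pow π (by omega)) u
  · rw [hc, ← mul_assoc, ← pow_add, Nat.add_sub_cancel' hj, hπ.pow_eq_zero, zero_mul]

theorem pow_add_dvd_pow_mul_iff {j k : ℕ} (h : k + j ≤ r) {a : R} :
    π ^ (k + j) ∣ π ^ k * a ↔ π ^ j ∣ a := by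
  have hkj := hπ.pow_mul_eq_zero_iff (j := r - (k + j)) (by omega) (a := π ^ k * a)
  have hj := hπ.pow_mul_eq_zero_iff (j := r - j) (by omega) (a := a)
  rw [Nat.sub_sub_self h] at hkj
  rw [Nat.sub_sub_self (by omega)] at hj
  rw [← hkj, ← hj, ← mul_assoc, ← pow_add, show r - (k + j) + k = r - j by omega]

theorem pow_pred_smul_mem_of_smul_mem {M : Type*} [AddCommGroup M] [Module R M]
    {U : Submodule R M} {d : R} (hd : d ≠ 0) {v : M} (h : d • v ∈ U) : π ^ (r - 1) • v ∈ U := by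
  obtain ⟨u, k, hu, rfl⟩ := hπ.exists_isUnit_mul_pow d
  have hk : k ≤ r - 1 := by
    by_contra hk
    exact hd (by rw [hπ.pow_eq_zero_iff.mpr (by omega), mul_zero])
  have hpow : π ^ (r - 1) = (↑hu.unit⁻¹ * π ^ (r - 1 - k)) * (u * π ^ k) := by
    rw [mul_mul_mul_comm, IsUnit.val_inv_mul, one_mul, ← pow_add, Nat.sub_add_cancel hk]
  rw [hpow, mul_smul]
  exact U.smul_mem _ h

theorem card_quotient_span_pow {k : ℕ} (hk : k ≤ r) :
    Nat.card (R ⧸ Ideal.span {π ^ k}) = Nat.card (R ⧸ IsLocalRing.maximalIdeal R) ^ k := by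
  induction k with
  | zero => simp
  | succ k ih =>
    let f := AddMonoidHom.mulLeft (π ^ k)
    have hle : (Ideal.span {π ^ (k + 1)}).toAddSubgroup ≤ (Ideal.span {π ^ k}).toAddSubgroup :=
      Ideal.span_singleton_le_span_singleton.mpr (pow_dvd_pow π k.le_succ)
    have hmap : AddSubgroup.map f ⊤ = (Ideal.span {π ^ k}).toAddSubgroup := by
      ext x
      simp [f, Ideal.mem_span_singleton, dvd_def, eq_comm]
    have hcomap : AddSubgroup.comap f (Ideal.span {π ^ (k + 1)}).toAddSubgroup =
        (IsLocalRing.maximalIdeal R).toAddSubgroup := by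
      ext a
      simpa [f, Ideal.mem_span_singleton, hπ.maximalIdeal_eq] using
        hπ.pow_add_dvd_pow_mul_iff (j := 1) (k := k) hk
    have hrel : (Ideal.span {π ^ (k + 1)}).toAddSubgroup.relIndex
        (Ideal.span {π ^ k}).toAddSubgroup = Nat.card (R ⧸ IsLocalRing.maximalIdeal R) := by
      rw [← hmap, ← AddSubgroup.relIndex_comap, hcomap, AddSubgroup.relIndex_top_right]
      rfl
    change (Ideal.span {π ^ (k + 1)}).toAddSubgroup.index = _
    rw [← AddSubgroup.relIndex_mul_index hle, hrel, pow_succ, mul_comm, ← ih (by omega)]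
    rfl

end IsChainUniformizer

end ChainRing

section Plane

variable {R : Type*} [CommRing R]

def det2 (x y : Fin 2 → R) : R := x 0 * y 1 - x 1 * y 0

theorem det2_swap (x y : Fin 2 → R) : det2 y x = -det2 x y := by
  simp only [det2]; ring

theorem det2_self (x : Fin 2 → R) : det2 x x = 0 := by
  simp only [det2]; ring

theorem det2_smul_left (x y : Fin 2 → R) (c : R) : det2 (c • x) y = c * det2 x y := by
  simp only [det2, Pi.smul_apply, smul_eq_mul]; ring

theorem det2_smul_right (x y : Fin 2 → R) (c : R) : det2 x (c • y) = c * det2 x y := by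
  simp only [det2, Pi.smul_apply, smul_eq_mul]; ring

def lineGen (π : R) : R ⊕ R → Fin 2 → R
  | .inl a => ![1, a]
  | .inr b => ![π * b, 1]

def lineCompl : R ⊕ R → Fin 2 → R
  | .inl _ => ![0, 1]
  | .inr _ => ![1, 0]

variable {π : R}

theorem isUnit_det2_lineCompl_lineGen (p : R ⊕ R) :
    IsUnit (det2 (lineCompl p) (lineGen π p)) := by
  cases p <;> simp [det2, lineCompl, lineGen]

theorem exists_eq_smul_lineGen_add_smul_lineCompl (p : R ⊕ R) (w : Fin 2 → R) :
    ∃ c d : R, w = c • lineGen π p + d • lineCompl p := by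
  cases p with
  | inl a => exact ⟨w 0, w 1 - w 0 * a, by ext i; fin_cases i <;> simp [lineGen, lineCompl]⟩
  | inr b => exact ⟨w 1, w 0 - w 1 * (π * b), by ext i; fin_cases i <;> simp [lineGen, lineCompl]⟩

theorem smul_mem_span_lineGen_iff (c : R) (x : Fin 2 → R) (p : R ⊕ R) :
    c • x ∈ span R {lineGen π p} ↔ c * det2 x (lineGen π p) = 0 := by
  rw [mem_span_singleton]
  constructor
  · rintro ⟨e, he⟩
    rw [← det2_smul_left, ← he, det2_smul_left, det2_self, mul_zero]
  · intro h
    cases p with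
    | inl a =>
      refine ⟨c * x 0, ?_⟩
      ext i; fin_cases i <;> simp [lineGen, det2] at h ⊢
      linear_combination h
    | inr b =>
      refine ⟨c * x 1, ?_⟩
      ext i; fin_cases i <;> simp [lineGen, det2] at h ⊢
      linear_combination -h

end Plane

theorem distMod_self {R : Type*} [CommRing R] {V : Type*} [AddCommGroup V] [Module R V]
    (π : R) (U : Submodule R V) : distMod π U U = 0 := by
  have h : nmin π U U = 0 := Nat.sInf_eq_zero.mpr (.inl (by simp))
  rw [distMod, h]

section Lines

variable {R : Type*} [CommRing R] {π : R} {r : ℕ}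

theorem nmin_span_lineGen (x : Fin 2 → R) (p : R ⊕ R) :
    nmin π (span R {x}) (span R {lineGen π p}) = sInf {m | π ^ m * det2 x (lineGen π p) = 0} := by
  simp only [nmin, smul_span, Set.smul_set_singleton, span_singleton_le_iff_mem,
    smul_mem_span_lineGen_iff]

theorem distMod_span_lineGen (p p' : R ⊕ R) :
    distMod π (span R {lineGen π p}) (span R {lineGen π p'}) =
      2 * nmin π (span R {lineGen π p}) (span R {lineGen π p'}) := by
  rw [distMod, two_mul, nmin_span_lineGen, nmin_span_lineGen, det2_swap]
  simp only [mul_neg, neg_eq_zero]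

theorem succ_le_nmin_span_lineGen_iff (hπ : π ^ r = 0) (k : ℕ) (x : Fin 2 → R) (p : R ⊕ R) :
    k + 1 ≤ nmin π (span R {x}) (span R {lineGen π p}) ↔ π ^ k * det2 x (lineGen π p) ≠ 0 := by
  rw [nmin_span_lineGen]
  refine ⟨fun h h0 => ?_, fun h => ?_⟩
  · have := Nat.sInf_le (show k ∈ {m | π ^ m * det2 x (lineGen π p) = 0} from h0)
    omega
  refine le_csInf ⟨r, by simp [hπ]⟩ fun m hm => ?_
  by_contra! hmk
  exact h (by rw [show k = (k - m) + m by omega, pow_add, mul_assoc, hm, mul_zero])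

/-- Two lines `span {lineGen π p}` agree modulo `π ^ s` exactly when `p` and `p'` have the same
image; the target thus parametrises the projective line over `R ⧸ π ^ s`. -/
def chartRed (π : R) (s : ℕ) : R ⊕ R → (R ⧸ Ideal.span {π ^ s}) ⊕ (R ⧸ Ideal.span {π ^ (s - 1)}) :=
  Sum.map (Ideal.Quotient.mk _) (Ideal.Quotient.mk _)

theorem chartRed_surjective (π : R) (s : ℕ) : Function.Surjective (chartRed π s) :=
  Ideal.Quotient.mk_surjective.sumMap Ideal.Quotient.mk_surjective

variable [IsLocalRing R]

theorem two_mul_le_distMod_span_lineGen_iff (hπ : IsChainUniformizer π r) {α : ℕ} (hα : 1 ≤ α)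
    (hαr : α ≤ r) (p p' : R ⊕ R) :
    2 * α ≤ distMod π (span R {lineGen π p}) (span R {lineGen π p'}) ↔
      ¬π ^ (r - α + 1) ∣ det2 (lineGen π p) (lineGen π p') := by
  obtain ⟨k, rfl⟩ : ∃ k, α = k + 1 := ⟨α - 1, by omega⟩
  rw [distMod_span_lineGen, Nat.mul_le_mul_left_iff two_pos,
    succ_le_nmin_span_lineGen_iff hπ.pow_eq_zero, Ne, hπ.pow_mul_eq_zero_iff (by omega),
    show r - (k + 1) + 1 = r - k by omega]

theorem pow_dvd_det2_lineGen_iff (hπ : IsChainUniformizer π r) {s : ℕ} (hs : 1 ≤ s) (hsr : s ≤ r)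
    (p p' : R ⊕ R) :
    π ^ s ∣ det2 (lineGen π p) (lineGen π p') ↔ chartRed π s p = chartRed π s p' := by
  have hmixed (c : R) : ¬π ^ s ∣ 1 - π * c := fun h =>
    hπ.not_dvd_one_sub_mul c ((dvd_pow_self π (by omega)).trans h)
  rcases p with a | b <;> rcases p' with a' | b' <;>
    simp only [chartRed, Sum.map_inl, Sum.map_inr, Sum.inl.injEq, Sum.inr.injEq, reduceCtorEq,
      iff_false, Ideal.Quotient.eq, Ideal.mem_span_singleton, lineGen, det2, Matrix.cons_val_zero,
      Matrix.cons_val_one, one_mul, mul_one]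
  · exact dvd_sub_comm
  · simpa [mul_left_comm] using hmixed (a * b')
  · rw [← dvd_neg, neg_sub]
    simpa [mul_assoc] using hmixed (b * a')
  · have h := hπ.pow_add_dvd_pow_mul_iff (k := 1) (j := s - 1) (by omega) (a := b - b')
    rwa [Nat.add_sub_cancel' hs, pow_one, mul_sub] at h

theorem span_lineGen_mem_boundary (hπ : IsChainUniformizer π r) (p : R ⊕ R) :
    span R {lineGen π p} ∈ boundary π r := by
  have hunit := isUnit_det2_lineCompl_lineGen (π := π) p
  constructor
  · intro hle
    have h := hle (smul_mem_pointwise_smul (lineCompl p) (π ^ (r - 1)) ⊤ mem_top)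
    rw [smul_mem_span_lineGen_iff] at h
    exact hπ.pow_pred_ne_zero (hunit.mul_left_eq_zero.mp h)
  · intro hle
    obtain ⟨w, -, hw⟩ := (mem_smul_pointwise_iff_exists _ _ _).mp (hle (mem_span_singleton_self _))
    rw [← hw, det2_smul_right] at hunit
    exact hπ.not_isUnit (isUnit_of_mul_isUnit_left hunit)

theorem exists_lineGen_mem (hπ : IsChainUniformizer π r) {U : Submodule R (Fin 2 → R)}
    (hU : ¬U ≤ π • ⊤) : ∃ p, lineGen π p ∈ U := by
  obtain ⟨x, hxU, hx⟩ := SetLike.not_le_iff_exists.mp hU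
  by_cases h0 : IsUnit (x 0)
  · refine ⟨.inl (↑h0.unit⁻¹ * x 1), ?_⟩
    convert U.smul_mem (↑h0.unit⁻¹ : R) hxU using 1
    ext i; fin_cases i <;> simp [lineGen]
  obtain ⟨c0, hc0⟩ := hπ.dvd_of_not_isUnit h0
  by_cases h1 : IsUnit (x 1)
  · refine ⟨.inr (↑h1.unit⁻¹ * c0), ?_⟩
    convert U.smul_mem (↑h1.unit⁻¹ : R) hxU using 1
    ext i; fin_cases i <;> simp [lineGen, hc0]
    ring
  obtain ⟨c1, hc1⟩ := hπ.dvd_of_not_isUnit h1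
  refine absurd ((mem_smul_pointwise_iff_exists _ _ _).mpr ⟨![c0, c1], mem_top, ?_⟩) hx
  ext i; fin_cases i <;> simp [hc0, hc1]

theorem eq_span_lineGen_of_mem (hπ : IsChainUniformizer π r) {U : Submodule R (Fin 2 → R)}
    (hU : ¬(π ^ (r - 1)) • ⊤ ≤ U) {p : R ⊕ R} (hp : lineGen π p ∈ U) :
    U = span R {lineGen π p} := by
  refine le_antisymm (fun w hw => ?_) ((span_singleton_le_iff_mem _ _).mpr hp)
  obtain ⟨c, d, rfl⟩ := exists_eq_smul_lineGen_add_smul_lineCompl (π := π) p w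
  have hd : d • lineCompl p ∈ U := by simpa using U.sub_mem hw (U.smul_mem c hp)
  obtain rfl : d = 0 := by
    by_contra hd0
    have he := hπ.pow_pred_smul_mem_of_smul_mem hd0 hd
    refine hU fun _ hv => ?_
    obtain ⟨v, -, rfl⟩ := (mem_smul_pointwise_iff_exists _ _ _).mp hv
    obtain ⟨c', d', rfl⟩ := exists_eq_smul_lineGen_add_smul_lineCompl (π := π) p v
    rw [smul_add, smul_comm _ c', smul_comm _ d']
    exact U.add_mem (U.smul_mem _ (U.smul_mem _ hp)) (U.smul_mem _ he)
  simpa using mem_span_singleton.mpr ⟨c, rfl⟩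

theorem exists_eq_span_lineGen (hπ : IsChainUniformizer π r) {U : Submodule R (Fin 2 → R)}
    (hU : U ∈ boundary π r) : ∃ p, U = span R {lineGen π p} :=
  let ⟨p, hp⟩ := exists_lineGen_mem hπ hU.2
  ⟨p, eq_span_lineGen_of_mem hπ hU.1 hp⟩

end Lines

section Codes

variable {R : Type*} [CommRing R]

/-- The paper's `card(d; R; ψ)` is the largest element of `codeCards π r ψ V` for `V` free of
rank `d`. -/
def codeCards (π : R) (r ψ : ℕ) (V : Type*) [AddCommGroup V] [Module R V] : Set ℕ :=
  {n | ∃ C : Set (Submodule R V), C ⊆ boundary π r ∧ C.Nontrivial ∧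
    (∀ U₁ ∈ C, ∀ U₂ ∈ C, U₁ ≠ U₂ → ψ ≤ distMod π U₁ U₂) ∧ Nat.card C = n}

variable {V W : Type*} [AddCommGroup V] [Module R V] [AddCommGroup W] [Module R W]

theorem nmin_map_equiv (e : V ≃ₗ[R] W) (π : R) (U₁ U₂ : Submodule R V) :
    nmin π (U₁.map (e : V →ₗ[R] W)) (U₂.map (e : V →ₗ[R] W)) = nmin π U₁ U₂ := by
  simp only [nmin, ← map_pointwise_smul, map_le_map_iff_of_injective e.injective]

theorem distMod_map_equiv (e : V ≃ₗ[R] W) (π : R) (U₁ U₂ : Submodule R V) :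
    distMod π (U₁.map (e : V →ₗ[R] W)) (U₂.map (e : V →ₗ[R] W)) = distMod π U₁ U₂ := by
  simp only [distMod, nmin_map_equiv]

theorem map_equiv_mem_boundary_iff (e : V ≃ₗ[R] W) (π : R) (r : ℕ) (U : Submodule R V) :
    U.map (e : V →ₗ[R] W) ∈ boundary π r ↔ U ∈ boundary π r := by
  have htop : (⊤ : Submodule R W) = (⊤ : Submodule R V).map (e : V →ₗ[R] W) := by simp
  simp only [boundary, Set.mem_ofPred_eq, htop, ← map_pointwise_smul,
    map_le_map_iff_of_injective e.injective]

theorem codeCards_subset_of_equiv (e : V ≃ₗ[R] W) (π : R) (r ψ : ℕ) :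
    codeCards π r ψ V ⊆ codeCards π r ψ W := by
  rintro n ⟨C, hCb, hCnt, hCd, rfl⟩
  have hinj : Function.Injective (map (e : V →ₗ[R] W)) := map_injective_of_injective e.injective
  refine ⟨map (e : V →ₗ[R] W) '' C, ?_, hCnt.image hinj, ?_, Nat.card_image_of_injective hinj C⟩
  · rintro _ ⟨U, hU, rfl⟩
    exact (map_equiv_mem_boundary_iff e π r U).mpr (hCb hU)
  · rintro _ ⟨U₁, h₁, rfl⟩ _ ⟨U₂, h₂, rfl⟩ hne
    rw [distMod_map_equiv]
    exact hCd U₁ h₁ U₂ h₂ (ne_of_apply_ne _ hne)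

theorem codeCards_congr (e : V ≃ₗ[R] W) (π : R) (r ψ : ℕ) :
    codeCards π r ψ V = codeCards π r ψ W :=
  (codeCards_subset_of_equiv e π r ψ).antisymm (codeCards_subset_of_equiv e.symm π r ψ)

end Codes

section PlaneCodes

variable {R : Type*} [CommRing R] [IsLocalRing R] {π : R} {r α : ℕ}

theorem card_le_of_forall_two_mul_le_distMod [Finite R] (hπ : IsChainUniformizer π r)
    (hα : 1 ≤ α) (hαr : α ≤ r) {C : Set (Submodule R (Fin 2 → R))} (hC : C ⊆ boundary π r)
    (hCd : ∀ U₁ ∈ C, ∀ U₂ ∈ C, U₁ ≠ U₂ → 2 * α ≤ distMod π U₁ U₂) :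
    Nat.card C ≤
      Nat.card ((R ⧸ Ideal.span {π ^ (r - α + 1)}) ⊕ (R ⧸ Ideal.span {π ^ (r - α + 1 - 1)})) := by
  have : Finite ((R ⧸ Ideal.span {π ^ (r - α + 1)}) ⊕ (R ⧸ Ideal.span {π ^ (r - α + 1 - 1)})) :=
    Finite.of_surjective _ (chartRed_surjective π (r - α + 1))
  choose p hp using fun U : C => exists_eq_span_lineGen hπ (hC U.2)
  refine Nat.card_le_card_of_injective (chartRed π (r - α + 1) ∘ p) fun U U' hUU' => ?_
  by_contra hne
  have hd := hCd U U.2 U' U'.2 (Subtype.coe_ne_coe.mpr hne)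
  rw [hp U, hp U', two_mul_le_distMod_span_lineGen_iff hπ hα hαr] at hd
  exact hd ((pow_dvd_det2_lineGen_iff hπ (by omega) (by omega) _ _).mpr hUU')

theorem card_mem_codeCards (hπ : IsChainUniformizer π r) (hα : 1 ≤ α) (hαr : α ≤ r) :
    Nat.card ((R ⧸ Ideal.span {π ^ (r - α + 1)}) ⊕ (R ⧸ Ideal.span {π ^ (r - α + 1 - 1)})) ∈
      codeCards π r (2 * α) (Fin 2 → R) := by
  let G t : Submodule R (Fin 2 → R) :=
    span R {lineGen π (Function.surjInv (chartRed_surjective π (r - α + 1)) t)}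
  have hsep t t' (h : t ≠ t') : 2 * α ≤ distMod π (G t) (G t') := by
    refine (two_mul_le_distMod_span_lineGen_iff hπ hα hαr _ _).mpr fun hdvd => h ?_
    simpa [Function.surjInv_eq] using
      (pow_dvd_det2_lineGen_iff hπ (by omega) (by omega) _ _).mp hdvd
  have hG : Function.Injective G := fun t t' h => by
    by_contra hne
    have := hsep t t' hne
    rw [h, distMod_self] at this
    omega
  refine ⟨Set.range G, ?_, ?_, ?_, Nat.card_range_of_injective hG⟩
  · rintro _ ⟨t, rfl⟩
    exact span_lineGen_mem_boundary hπ _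
  · exact ⟨G (.inl 0), ⟨_, rfl⟩, G (.inr 0), ⟨_, rfl⟩, hG.ne Sum.inl_ne_inr⟩
  · rintro _ ⟨t, rfl⟩ _ ⟨t', rfl⟩ hne
    exact hsep t t' (ne_of_apply_ne G hne)

end PlaneCodes

theorem card_max_rank_two_general
    {R : Type*} [CommRing R] [Fintype R] [IsLocalRing R]
    {V : Type*} [AddCommGroup V] [Module R V]
    (r : ℕ) (b : Module.Basis (Fin 2) R V)
    (π : R) (hmax : IsLocalRing.maximalIdeal R = Ideal.span {π})
    (hπr : π ^ r = 0) (hπr' : π ^ (r - 1) ≠ 0)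
    (q : ℕ) (hq : q = Nat.card (R ⧸ IsLocalRing.maximalIdeal R))
    (α : ℕ) (hα : 1 ≤ α) (hαr : α ≤ r) :
    IsGreatest {n : ℕ | ∃ C : Set (Submodule R V),
      C ⊆ boundary π r ∧ C.Nontrivial ∧
      (∀ U₁ ∈ C, ∀ U₂ ∈ C, U₁ ≠ U₂ → 2 * α ≤ distMod π U₁ U₂) ∧
      Nat.card C = n} ((q + 1) * q ^ (r - α)) := by
  have hπ : IsChainUniformizer π r := ⟨hmax, hπr, hπr'⟩
  have hcard : Nat.card ((R ⧸ Ideal.span {π ^ (r - α + 1)}) ⊕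
      (R ⧸ Ideal.span {π ^ (r - α + 1 - 1)})) = (q + 1) * q ^ (r - α) := by
    rw [Nat.card_sum, hπ.card_quotient_span_pow (by omega), hπ.card_quotient_span_pow (by omega),
      ← hq, Nat.add_sub_cancel, pow_succ]
    ring
  change IsGreatest (codeCards π r (2 * α) V) _
  rw [← hcard, codeCards_congr b.equivFun]
  exact ⟨card_mem_codeCards hπ hα hαr, fun n ⟨C, hC, _, hCd, hn⟩ =>
    hn ▸ card_le_of_forall_two_mul_le_distMod hπ hα hαr hC hCd⟩

/-- For `d = 2`: `card(2;R;2α) = (q+1) q^{r-α}`, the maximal cardinality of a spherical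
code in `V_r` of minimum distance at least `2α`. -/
theorem card_max_rank_two
    {R : Type*} [CommRing R] [Fintype R] [IsLocalRing R]
    {V : Type*} [AddCommGroup V] [Module R V]
    (r : ℕ) (hr : 1 ≤ r) (b : Module.Basis (Fin 2) R V)
    (π : R) (hmax : IsLocalRing.maximalIdeal R = Ideal.span {π})
    (hπr : π ^ r = 0) (hπr' : π ^ (r - 1) ≠ 0)
    (q : ℕ) (hq : q = Nat.card (R ⧸ IsLocalRing.maximalIdeal R))
    (α : ℕ) (hα : 1 ≤ α) (hαr : α ≤ r) :
    IsGreatest {n : ℕ | ∃ C : Set (Submodule R V),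
      C ⊆ boundary π r ∧ C.Nontrivial ∧
      (∀ U₁ ∈ C, ∀ U₂ ∈ C, U₁ ≠ U₂ → 2 * α ≤ distMod π U₁ U₂) ∧
      Nat.card C = n} ((q + 1) * q ^ (r - α)) :=
  card_max_rank_two_general r b π hmax hπr hπr' q hq α hα hαr

end SphericalSubmoduleCodes
end

section
/- Let ε ∈ ∂E_r^(d), let ε̃₁ > ε̃₂ > … > ε̃_{ℓ+1} = 0 be the distinct values among ε₁,…,ε_d, and for each s ∈ {1,…,ℓ+1} let m_s = |{i : ε_i = ε̃_s}|. Then the 𝐞-permutation code C = {[U_δ] : δ ∈ Sym(d)·ε} satisfies |C| = d!/(m₁! m₂! ⋯ m_{ℓ+1}!) and dist(C) = 2·min{ε̃_j − ε̃_i : 1 ≤ j < i ≤ ℓ+1} (the minimum of the positive differences between distinct values of ε). -/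
/-!
In the basis `e`, `π^m U_δ ⊆ U_δ'` holds iff `δ'_i ≤ m + δ_i` for every `i` (reading off
coordinates, using `π^{r-1} ≠ 0` and `δ' ≤ r`). Hence `δ ↦ U_δ` is injective on exponents
bounded by `r`, and `dist(U_δ, U_δ') = max_i (δ'_i - δ_i) + max_i (δ_i - δ'_i)`.

So the code is in bijection with the orbit of `ε` under permutation of coordinates, whose size
is given by orbit–stabilizer. Two distinct rearrangements of `ε` have the same coordinate sum,
so each exceeds the other in some coordinate, and by at least the smallest gap between values
of `ε`; the transposition of two coordinates realizing that gap attains `2 · gap`.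
-/

open Pointwise

namespace SphericalSubmoduleCodes

/-- `U_δ = Rπ^{δ₁}e₁ ⊕ … ⊕ Rπ^{δ_d}e_d`. -/
noncomputable def Udelta {R : Type*} [CommRing R] {V : Type*} [AddCommGroup V] [Module R V]
    {d : ℕ} (π : R) (b : Module.Basis (Fin d) R V) (δ : Fin d → ℕ) : Submodule R V :=
  ⨆ i : Fin d, Submodule.span R {(π ^ δ i) • b i}

/-- The `𝐞`-permutation code `{[U_δ] : δ ∈ Sym(d)·ε}`. -/
noncomputable def permCode {R : Type*} [CommRing R] {V : Type*} [AddCommGroup V] [Module R V]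
    {d : ℕ} (π : R) (b : Module.Basis (Fin d) R V) (ε : Fin d → ℕ) : Set (Submodule R V) :=
  {U | ∃ σ : Equiv.Perm (Fin d), U = Udelta π b (ε ∘ σ)}

end SphericalSubmoduleCodes

namespace SphericalSubmoduleCodes

section Udelta

variable {R : Type*} [CommRing R] {V : Type*} [AddCommGroup V] [Module R V] {d : ℕ}

lemma le_of_pow_dvd_pow_of_pow_eq_zero {π : R} {r a c : ℕ} (hπr : π ^ r = 0)
    (hπr' : π ^ (r - 1) ≠ 0) (hc : c ≤ r) (h : π ^ c ∣ π ^ a) : c ≤ a := by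
  by_contra! hac
  obtain ⟨u, hu⟩ := h
  apply hπr'
  calc π ^ (r - 1) = π ^ a * π ^ (r - 1 - a) := by rw [← pow_add]; congr 1; omega
    _ = π ^ r * (π ^ (c - a - 1) * u) := by
      rw [hu, mul_right_comm, ← pow_add, show c + (r - 1 - a) = r + (c - a - 1) by omega,
        pow_add, mul_assoc]
    _ = 0 := by rw [hπr, zero_mul]

lemma pow_smul_mem_Udelta (π : R) (b : Module.Basis (Fin d) R V) (δ : Fin d → ℕ) (i : Fin d) :
    (π ^ δ i) • b i ∈ Udelta π b δ :=
  Submodule.mem_iSup_of_mem i (Submodule.mem_span_singleton_self _)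

lemma pow_dvd_repr_of_mem_Udelta {π : R} {b : Module.Basis (Fin d) R V} {δ : Fin d → ℕ}
    {x : V} (hx : x ∈ Udelta π b δ) (i : Fin d) : π ^ δ i ∣ b.repr x i := by
  suffices Udelta π b δ ≤ Submodule.comap (b.coord i) (Ideal.span {π ^ δ i}) from
    Ideal.mem_span_singleton.mp (this hx)
  refine iSup_le fun j => (Submodule.span_singleton_le_iff_mem _ _).mpr ?_
  rw [Submodule.mem_comap, map_smul, Module.Basis.coord_apply, Module.Basis.repr_self]
  rcases eq_or_ne j i with rfl | hji
  · simp
  · simp [hji]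

lemma smul_Udelta_le_Udelta_iff {π : R} {r : ℕ} (hπr : π ^ r = 0) (hπr' : π ^ (r - 1) ≠ 0)
    (b : Module.Basis (Fin d) R V) {δ δ' : Fin d → ℕ} (hδ' : ∀ i, δ' i ≤ r) (m : ℕ) :
    (π ^ m) • Udelta π b δ ≤ Udelta π b δ' ↔ ∀ i, δ' i ≤ m + δ i := by
  constructor
  · intro h i
    have hmem : (π ^ (m + δ i)) • b i ∈ Udelta π b δ' := by
      rw [pow_add, mul_smul]
      exact h (Submodule.smul_mem_pointwise_smul _ _ _ (pow_smul_mem_Udelta π b δ i))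
    have hdvd := pow_dvd_repr_of_mem_Udelta hmem i
    simp only [map_smul, Module.Basis.repr_self, Finsupp.smul_single, smul_eq_mul, mul_one,
      Finsupp.single_eq_same] at hdvd
    exact le_of_pow_dvd_pow_of_pow_eq_zero hπr hπr' (hδ' i) hdvd
  · intro h
    rw [Udelta, ← Submodule.span_range_eq_iSup, Submodule.smul_span, Submodule.span_le]
    rintro _ ⟨_, ⟨i, rfl⟩, rfl⟩
    show (π ^ m) • (π ^ δ i) • b i ∈ Udelta π b δ'
    rw [smul_smul, ← pow_add, ← Nat.sub_add_cancel (h i), pow_add, mul_smul]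
    exact Submodule.smul_mem _ _ (pow_smul_mem_Udelta π b δ' i)

lemma Udelta_injOn {π : R} {r : ℕ} (hπr : π ^ r = 0) (hπr' : π ^ (r - 1) ≠ 0)
    (b : Module.Basis (Fin d) R V) : Set.InjOn (Udelta π b) {δ | ∀ i, δ i ≤ r} := by
  intro δ hδ δ' hδ' h
  have h₁ := (smul_Udelta_le_Udelta_iff hπr hπr' b hδ' 0).mp (by simpa using h.le)
  have h₂ := (smul_Udelta_le_Udelta_iff hπr hπr' b hδ 0).mp (by simpa using h.ge)
  funext i
  have := h₁ i
  have := h₂ i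
  omega

lemma nmin_Udelta {π : R} {r : ℕ} (hπr : π ^ r = 0) (hπr' : π ^ (r - 1) ≠ 0)
    (b : Module.Basis (Fin d) R V) {δ δ' : Fin d → ℕ} (hδ' : ∀ i, δ' i ≤ r) :
    nmin π (Udelta π b δ) (Udelta π b δ') = Finset.univ.sup fun i => δ' i - δ i := by
  have hset : {m : ℕ | (π ^ m) • Udelta π b δ ≤ Udelta π b δ'} =
      Set.Ici (Finset.univ.sup fun i => δ' i - δ i) := by
    ext m
    simp only [Set.mem_ofPred_eq, smul_Udelta_le_Udelta_iff hπr hπr' b hδ', Set.mem_Ici,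
      Finset.sup_le_iff, Finset.mem_univ, true_implies]
    exact forall_congr' fun i => by omega
  rw [nmin, hset, csInf_Ici]

end Udelta

section Rearrangement

variable {d : ℕ}

-- `sInf ∅ = 0`: this is `0` when `ε` is constant.
noncomputable def minGap (ε : Fin d → ℕ) : ℕ :=
  sInf {k : ℕ | ∃ i j : Fin d, ε j < ε i ∧ k = ε i - ε j}

lemma minGap_le {ε : Fin d → ℕ} {i j : Fin d} (h : ε j < ε i) : minGap ε ≤ ε i - ε j :=
  Nat.sInf_le ⟨i, j, h, rfl⟩

lemma exists_minGap_eq {ε : Fin d → ℕ} (h : ∃ i j, ε j < ε i) :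
    ∃ i j, ε j < ε i ∧ minGap ε = ε i - ε j := by
  obtain ⟨i, j, hij⟩ := h
  exact Nat.sInf_mem (s := {k | ∃ i j, ε j < ε i ∧ k = ε i - ε j}) ⟨_, i, j, hij, rfl⟩

lemma exists_lt_of_comp_perm_ne {ε : Fin d → ℕ} {σ τ : Equiv.Perm (Fin d)}
    (h : ε ∘ σ ≠ ε ∘ τ) : ∃ k, ε (σ k) < ε (τ k) := by
  by_contra! hge
  have hsum : ∑ k, ε (τ k) = ∑ k, ε (σ k) := by
    rw [Equiv.sum_comp σ ε, Equiv.sum_comp τ ε]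
  exact h <| funext fun k =>
    ((Finset.sum_eq_sum_iff_of_le fun k _ => hge k).mp hsum k (Finset.mem_univ k)).symm

lemma minGap_le_sup_tsub_of_comp_perm_ne {ε : Fin d → ℕ} {σ τ : Equiv.Perm (Fin d)}
    (h : ε ∘ σ ≠ ε ∘ τ) :
    minGap ε ≤ Finset.univ.sup fun k => ε (τ k) - ε (σ k) := by
  obtain ⟨k, hk⟩ := exists_lt_of_comp_perm_ne h
  exact (minGap_le hk).trans <|
    Finset.le_sup (f := fun k => ε (τ k) - ε (σ k)) (Finset.mem_univ k)

lemma sup_comp_swap_tsub {f : Fin d → ℕ} {i j : Fin d} (h : f j ≤ f i) :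
    (Finset.univ.sup fun k => f (Equiv.swap i j k) - f k) = f i - f j := by
  refine le_antisymm (Finset.sup_le fun k _ => ?_) ?_
  · rcases eq_or_ne k i with rfl | hki
    · simp [Nat.sub_eq_zero_of_le h]
    rcases eq_or_ne k j with rfl | hkj
    · simp
    · simp [Equiv.swap_apply_of_ne_of_ne hki hkj]
  · simpa using Finset.le_sup (f := fun k => f (Equiv.swap i j k) - f k) (Finset.mem_univ j)

lemma sup_tsub_comp_swap {f : Fin d → ℕ} {i j : Fin d} (h : f j ≤ f i) :
    (Finset.univ.sup fun k => f k - f (Equiv.swap i j k)) = f i - f j := by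
  rw [← sup_comp_swap_tsub h, ← Finset.map_univ_equiv (Equiv.swap i j), Finset.sup_map]
  simp [Function.comp_def]

open MulAction in
lemma card_range_comp_perm_mul_prod_factorial {α β : Type*} [Fintype α] [DecidableEq β]
    (f : α → β) :
    Nat.card (Set.range fun σ : Equiv.Perm α => f ∘ σ) *
      ∏ v ∈ Finset.univ.image f, (Finset.univ.filter fun a => f a = v).card.factorial =
      (Fintype.card α).factorial := by
  classical
  have horbit : (Set.range fun σ : Equiv.Perm α => f ∘ σ) = orbit (Equiv.Perm α)ᵈᵐᵃ f :=
    (DomMulAct.mk.symm.surjective.range_comp _).symm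
  have hstab : Nat.card (stabilizer (Equiv.Perm α)ᵈᵐᵃ f) =
      ∏ v ∈ Finset.univ.image f, (Finset.univ.filter fun a => f a = v).card.factorial := by
    rw [Nat.card_congr (Equiv.subtypeEquiv (q := fun g : Equiv.Perm α => f ∘ g = f)
        DomMulAct.mk.symm fun _ => DomMulAct.mem_stabilizer_iff),
      Nat.card_eq_fintype_card, DomMulAct.stabilizer_card']
    simp only [Fintype.card_subtype]
  rw [horbit, ← hstab, ← Nat.card_prod,
    Nat.card_congr (orbitProdStabilizerEquivGroup (Equiv.Perm α)ᵈᵐᵃ f),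
    ← Nat.card_congr DomMulAct.mk, Nat.card_eq_fintype_card, Fintype.card_perm]

end Rearrangement

section PermCode

variable {R : Type*} [CommRing R] {V : Type*} [AddCommGroup V] [Module R V] {d : ℕ}

lemma permCode_eq_image (π : R) (b : Module.Basis (Fin d) R V) (ε : Fin d → ℕ) :
    permCode π b ε = Udelta π b '' Set.range fun σ : Equiv.Perm (Fin d) => ε ∘ σ := by
  rw [← Set.range_comp]
  ext U
  simp only [permCode, Set.mem_ofPred_eq, Set.mem_range, Function.comp_apply, eq_comm]

lemma card_permCode {π : R} {r : ℕ} (hπr : π ^ r = 0) (hπr' : π ^ (r - 1) ≠ 0)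
    (b : Module.Basis (Fin d) R V) {ε : Fin d → ℕ} (hε : ∀ i, ε i ≤ r) :
    Nat.card (permCode π b ε) =
      d.factorial / ∏ v ∈ Finset.univ.image ε,
        (Finset.univ.filter fun i => ε i = v).card.factorial := by
  have hinj : Set.InjOn (Udelta π b) (Set.range fun σ : Equiv.Perm (Fin d) => ε ∘ σ) :=
    (Udelta_injOn hπr hπr' b).mono (by rintro _ ⟨σ, rfl⟩ i; exact hε _)
  rw [permCode_eq_image, Nat.card_congr (Equiv.Set.imageOfInjOn _ _ hinj).symm]
  refine Nat.eq_div_of_mul_eq_left (Finset.prod_ne_zero_iff.mpr fun _ _ => ?_) ?_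
  · exact Nat.factorial_ne_zero _
  · simpa using card_range_comp_perm_mul_prod_factorial ε

lemma minDist_permCode {π : R} {r : ℕ} (hπr : π ^ r = 0) (hπr' : π ^ (r - 1) ≠ 0)
    (b : Module.Basis (Fin d) R V) {ε : Fin d → ℕ} (hε : ∀ i, ε i ≤ r)
    (hnonconst : ∃ i j, ε j < ε i) :
    minDist π (permCode π b ε) = 2 * minGap ε := by
  have hdist : ∀ σ τ : Equiv.Perm (Fin d),
      distMod π (Udelta π b (ε ∘ σ)) (Udelta π b (ε ∘ τ)) =
        (Finset.univ.sup fun k => ε (τ k) - ε (σ k)) +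
          Finset.univ.sup fun k => ε (σ k) - ε (τ k) := fun σ τ => by
    rw [distMod, nmin_Udelta hπr hπr' b (δ' := ε ∘ τ) fun _ => hε _,
      nmin_Udelta hπr hπr' b (δ' := ε ∘ σ) fun _ => hε _]
    rfl
  refine IsLeast.csInf_eq ⟨?_, ?_⟩
  · obtain ⟨i, j, hij, hgap⟩ := exists_minGap_eq hnonconst
    refine ⟨_, ⟨1, rfl⟩, _, ⟨Equiv.swap i j, rfl⟩, fun h => ?_, ?_⟩
    · have := congrFun (Udelta_injOn hπr hπr' b (fun _ => hε _) (fun _ => hε _) h) i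
      simp only [Equiv.Perm.coe_one, id_eq, Equiv.swap_apply_left] at this
      omega
    · rw [hdist]
      simp only [Equiv.Perm.coe_one, id_eq, sup_comp_swap_tsub hij.le, sup_tsub_comp_swap hij.le]
      omega
  · rintro n ⟨_, ⟨σ, rfl⟩, _, ⟨τ, rfl⟩, hne, rfl⟩
    have hδ : ε ∘ σ ≠ ε ∘ τ := fun h => hne (by rw [h])
    rw [hdist, two_mul]
    exact add_le_add (minGap_le_sup_tsub_of_comp_perm_ne hδ)
      (minGap_le_sup_tsub_of_comp_perm_ne hδ.symm)

end PermCode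

/-- Cardinality and minimum distance of an `𝐞`-permutation code:
`|C| = d!/(m₁!⋯m_{ℓ+1}!)` where the `m_s` are the multiplicities of the distinct
values of `ε`, and `dist(C) = 2·min{ε̃_j − ε̃_i}`, the minimum positive difference
of distinct values of `ε`. -/
theorem permCode_card_and_minDist
    {R : Type*} [CommRing R]
    {V : Type*} [AddCommGroup V] [Module R V]
    (d r : ℕ) (hd : 2 ≤ d) (hr : 1 ≤ r) (b : Module.Basis (Fin d) R V)
    (π : R)
    (hπr : π ^ r = 0) (hπr' : π ^ (r - 1) ≠ 0)
    (ε : Fin d → ℕ)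
    (hεanti : ∀ i j : Fin d, i ≤ j → ε j ≤ ε i)
    (hε0 : ε ⟨0, by omega⟩ = r) (hεlast : ε ⟨d - 1, by omega⟩ = 0) :
    Nat.card (permCode π b ε) =
      d.factorial /
        ∏ v ∈ Finset.image ε Finset.univ,
          (Finset.univ.filter (fun i : Fin d => ε i = v)).card.factorial ∧
    minDist π (permCode π b ε) =
      2 * sInf {k : ℕ | ∃ i j : Fin d, ε j < ε i ∧ k = ε i - ε j} := by
  have hεr : ∀ i, ε i ≤ r := fun i => hε0 ▸ hεanti _ i (Nat.zero_le _)
  have hnonconst : ∃ i j, ε j < ε i := ⟨⟨0, by omega⟩, ⟨d - 1, by omega⟩, by omega⟩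
  exact ⟨card_permCode hπr hπr' b hεr, minDist_permCode hπr hπr' b hεr hnonconst⟩

end SphericalSubmoduleCodes
end

section
/- For each n ∈ {1,…,d−1}, the set F_r^n = {U_δ : δ ∈ Sym(d)·(r,…,r,0,…,0)} (with n trailing zeros, i.e. all submodules spanned by π^r-scaled and unscaled basis vectors with exactly n unscaled ones) is a spherical code in V_r of minimum distance 2r and cardinality d!/(n!(d−n)!). -/
open Pointwise

/-!
Since `π ^ r = 0`, a module `U_δ` with `δ ∈ {0, r}^d` is the coordinate submodule spanned by
the `e_i` with `δ_i = 0`, so `F_r^n` is the set of coordinate submodules on `n`-element index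
sets, which has `C(d, n)` elements. If `s ⊄ t` and `j ∈ s \ t`, then `π^m e_j` lies in the span
of `e_t` only when `π^m = 0`, i.e. `m ≥ r`; hence distinct codewords are at distance `r + r`.
A codeword misses `π^(r-1) e_j` for `j` outside its index set, and contains a basis vector,
which is not in `πV` because the nilpotent `π` is not a unit.
-/

namespace SphericalSubmoduleCodes

theorem one_lt_choose {d n : ℕ} (hn : 0 < n) (hnd : n < d) : 1 < d.choose n := by
  obtain ⟨d, rfl⟩ : ∃ d', d = d' + 1 := ⟨d - 1, by omega⟩
  obtain ⟨n, rfl⟩ : ∃ n', n = n' + 1 := ⟨n - 1, by omega⟩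
  have h₁ := Nat.choose_pos (show n ≤ d by omega)
  have h₂ := Nat.choose_pos (show n + 1 ≤ d by omega)
  rw [Nat.choose_succ_succ']
  omega

section

variable {R : Type*} [CommRing R] {V : Type*} [AddCommGroup V] [Module R V]

theorem pow_eq_zero_iff_le_of_pow_pred_ne_zero {π : R} {r : ℕ} (hπr : π ^ r = 0)
    (hπr' : π ^ (r - 1) ≠ 0) (m : ℕ) : π ^ m = 0 ↔ r ≤ m := by
  refine ⟨fun hm => ?_, fun hm => pow_eq_zero_of_le hm hπr⟩
  by_contra! hlt
  exact hπr' (pow_eq_zero_of_le (by omega) hm)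

theorem pointwise_smul_le_iff {a : R} {S T : Submodule R V} :
    a • S ≤ T ↔ ∀ x ∈ S, a • x ∈ T := by
  rw [← SetLike.coe_subset_coe, Submodule.coe_pointwise_smul]
  exact Set.smul_set_subset_iff

theorem minDist_eq_of_forall_distMod_eq {π : R} {C : Set (Submodule R V)} {k : ℕ}
    (hC : C.Nontrivial) (h : ∀ U₁ ∈ C, ∀ U₂ ∈ C, U₁ ≠ U₂ → distMod π U₁ U₂ = k) :
    minDist π C = k := by
  obtain ⟨U₁, h₁, U₂, h₂, hne⟩ := hC
  have hk : {n : ℕ | ∃ U₁ ∈ C, ∃ U₂ ∈ C, U₁ ≠ U₂ ∧ distMod π U₁ U₂ = n} = {k} := by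
    ext n
    constructor
    · rintro ⟨V₁, hV₁, V₂, hV₂, hVne, rfl⟩
      exact h V₁ hV₁ V₂ hV₂ hVne
    · rintro rfl
      exact ⟨U₁, h₁, U₂, h₂, hne, h U₁ h₁ U₂ h₂ hne⟩
  rw [minDist, hk, csInf_singleton]

variable {ι : Type*} (b : Module.Basis ι R V)

theorem smul_basis_mem_span_image_iff {a : R} (ha : a ≠ 0) {j : ι} {s : Set ι} :
    a • b j ∈ Submodule.span R (b '' s) ↔ j ∈ s := by
  rw [b.mem_span_image, map_smul, b.repr_self, Finsupp.smul_single, smul_eq_mul, mul_one,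
    Finsupp.support_single _ ha, Finset.coe_singleton, Set.singleton_subset_iff]

theorem isUnit_of_basis_mem_smul_top {a : R} {i : ι} (h : b i ∈ a • (⊤ : Submodule R V)) :
    IsUnit a := by
  obtain ⟨y, -, hy⟩ := (Submodule.mem_smul_pointwise_iff_exists _ _ _).mp h
  refine IsUnit.of_mul_eq_one (b.repr y i) ?_
  simpa using congrArg (fun z => b.repr z i) hy

theorem span_image_injective [Nontrivial R] :
    Function.Injective (fun s : Set ι => Submodule.span R (b '' s)) := by
  intro s t hst
  ext i
  simp only at hst
  rw [← b.self_mem_span_image, ← b.self_mem_span_image (s := t), hst]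

variable {π : R} {r : ℕ}

theorem span_image_mem_boundary (hπr : π ^ r = 0) (hπr' : π ^ (r - 1) ≠ 0) {s : Set ι}
    (hs : s.Nonempty) (hsc : sᶜ.Nonempty) : Submodule.span R (b '' s) ∈ boundary π r := by
  have : Nontrivial R := nontrivial_of_ne _ _ hπr'
  obtain ⟨i, hi⟩ := hs
  obtain ⟨j, hj⟩ := hsc
  refine ⟨fun hle => hj ?_, fun hle => ?_⟩
  · exact (smul_basis_mem_span_image_iff b hπr').mp
      (hle (Submodule.smul_mem_pointwise_smul _ _ _ Submodule.mem_top))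
  · exact IsNilpotent.not_isUnit ⟨r, hπr⟩
      (isUnit_of_basis_mem_smul_top b (hle (Submodule.subset_span ⟨i, hi, rfl⟩)))

theorem pow_smul_span_image_le_iff (hπ : ∀ m, π ^ m = 0 ↔ r ≤ m) {s t : Set ι}
    (hst : ¬ s ⊆ t) (m : ℕ) :
    π ^ m • Submodule.span R (b '' s) ≤ Submodule.span R (b '' t) ↔ r ≤ m := by
  rw [← hπ]
  refine ⟨fun hle => ?_, fun hm => ?_⟩
  · obtain ⟨j, hjs, hjt⟩ := Set.not_subset.mp hst
    by_contra hm
    exact hjt ((smul_basis_mem_span_image_iff b hm).mp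
      (hle (Submodule.smul_mem_pointwise_smul _ _ _ (Submodule.subset_span ⟨j, hjs, rfl⟩))))
  · rw [pointwise_smul_le_iff, hm]
    exact fun x _ => (zero_smul R x).symm ▸ Submodule.zero_mem _

theorem nmin_span_image (hπ : ∀ m, π ^ m = 0 ↔ r ≤ m) {s t : Set ι} (hst : ¬ s ⊆ t) :
    nmin π (Submodule.span R (b '' s)) (Submodule.span R (b '' t)) = r := by
  have hset : {m | π ^ m • Submodule.span R (b '' s) ≤ Submodule.span R (b '' t)} = Set.Ici r :=
    Set.ext (pow_smul_span_image_le_iff b hπ hst)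
  rw [nmin, hset, csInf_Ici]

theorem distMod_span_image (hπ : ∀ m, π ^ m = 0 ↔ r ≤ m) {s t : Finset ι} (hst : s ≠ t)
    (hcard : s.card = t.card) :
    distMod π (Submodule.span R (b '' s)) (Submodule.span R (b '' t)) = 2 * r := by
  have hst' : ¬ s ⊆ t := fun h => hst (Finset.eq_of_subset_of_card_le h hcard.ge)
  have hts' : ¬ t ⊆ s := fun h => hst (Finset.eq_of_subset_of_card_le h hcard.le).symm
  rw [distMod, nmin_span_image b hπ (by exact_mod_cast hst'),
    nmin_span_image b hπ (by exact_mod_cast hts'), two_mul]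

def coordCode (n : ℕ) : Set (Submodule R V) :=
  (fun s : Finset ι => Submodule.span R (b '' s)) '' {s | s.card = n}

theorem coordCode_subset_boundary [Fintype ι] (hπr : π ^ r = 0) (hπr' : π ^ (r - 1) ≠ 0)
    {n : ℕ} (hn : 0 < n) (hn' : n < Fintype.card ι) : coordCode b n ⊆ boundary π r := by
  classical
  rintro _ ⟨s, hs, rfl⟩
  refine span_image_mem_boundary b hπr hπr' (Finset.coe_nonempty.mpr (Finset.card_pos.mp ?_)) ?_
  · rwa [hs]
  · rw [← Finset.coe_compl, Finset.coe_nonempty, ← Finset.card_pos, Finset.card_compl]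
    rw [Set.mem_ofPred_eq] at hs
    omega

theorem minDist_coordCode (hπ : ∀ m, π ^ m = 0 ↔ r ≤ m) {n : ℕ}
    (hC : (coordCode b n).Nontrivial) : minDist π (coordCode b n) = 2 * r := by
  refine minDist_eq_of_forall_distMod_eq hC ?_
  rintro _ ⟨s, hs, rfl⟩ _ ⟨t, ht, rfl⟩ hne
  exact distMod_span_image b hπ (fun h => hne (h ▸ rfl)) (hs.trans ht.symm)

theorem natCard_coordCode [Nontrivial R] [Fintype ι] (n : ℕ) :
    Nat.card (coordCode b n) = (Fintype.card ι).choose n := by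
  have hinj : Function.Injective (fun s : Finset ι => Submodule.span R (b '' s)) :=
    (span_image_injective b).comp Finset.coe_injective
  rw [coordCode, Nat.card_image_of_injective hinj, Set.coe_ofPred, Nat.card_eq_fintype_card,
    Fintype.card_finset_len]

theorem coordCode_nontrivial [Nontrivial R] [Fintype ι] {n : ℕ} (hn : 0 < n)
    (hn' : n < Fintype.card ι) : (coordCode b n).Nontrivial := by
  have hlt : 1 < Nat.card (coordCode b n) := natCard_coordCode b n ▸ one_lt_choose hn hn'
  have : Finite (coordCode b n) := Nat.finite_of_card_ne_zero (by omega)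
  rwa [← Set.nontrivial_coe_sort, ← Finite.one_lt_card_iff_nontrivial]

end

section

variable {R : Type*} [CommRing R] {V : Type*} [AddCommGroup V] [Module R V] {d : ℕ}
  (b : Module.Basis (Fin d) R V) {π : R} {r : ℕ}

theorem Udelta_eq_span_image (hπr : π ^ r = 0) {δ : Fin d → ℕ} (hδ : ∀ i, δ i = 0 ∨ δ i = r) :
    Udelta π b δ = Submodule.span R (b '' {i | δ i = 0}) := by
  apply le_antisymm
  · refine iSup_le fun i => (Submodule.span_singleton_le_iff_mem _ _).mpr ?_
    rcases hδ i with h | h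
    · rw [h, pow_zero, one_smul]
      exact Submodule.subset_span ⟨i, h, rfl⟩
    · rw [h, hπr, zero_smul]
      exact Submodule.zero_mem _
  · rw [Submodule.span_le]
    rintro _ ⟨i, hi, rfl⟩
    have hbi : b i = π ^ δ i • b i := by rw [Set.mem_ofPred_eq.mp hi, pow_zero, one_smul]
    rw [SetLike.mem_coe, hbi]
    exact Submodule.mem_iSup_of_mem i (Submodule.mem_span_singleton_self _)

theorem setOf_Udelta_eq_coordCode (hπr : π ^ r = 0) (hr : r ≠ 0) (n : ℕ) :
    {U | ∃ δ : Fin d → ℕ, (∀ i, δ i = 0 ∨ δ i = r) ∧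
      (Finset.univ.filter (fun i : Fin d => δ i = 0)).card = n ∧ U = Udelta π b δ} =
      coordCode b n := by
  ext U
  simp only [coordCode, Set.mem_ofPred_eq, Set.mem_image]
  constructor
  · rintro ⟨δ, hδ, hcard, rfl⟩
    refine ⟨Finset.univ.filter (fun i => δ i = 0), hcard, ?_⟩
    rw [Udelta_eq_span_image b hπr hδ, Finset.coe_filter_univ]
  · rintro ⟨s, hcard, rfl⟩
    set δ : Fin d → ℕ := fun i => if i ∈ s then 0 else r
    have hδ : ∀ i, δ i = 0 ∨ δ i = r := fun i => by by_cases h : i ∈ s <;> simp [δ, h]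
    have hδs : {i | δ i = 0} = s := Set.ext fun i => by by_cases h : i ∈ s <;> simp [δ, h, hr]
    refine ⟨δ, hδ, ?_, by rw [Udelta_eq_span_image b hπr hδ, hδs]⟩
    rw [← hcard]
    exact congrArg Finset.card (Finset.coe_injective (by rw [Finset.coe_filter_univ, hδs]))

end

theorem free_permCode_props_general
    {R : Type*} [CommRing R]
    {V : Type*} [AddCommGroup V] [Module R V]
    (d r : ℕ) (hr : 1 ≤ r) (b : Module.Basis (Fin d) R V)
    (π : R)
    (hπr : π ^ r = 0) (hπr' : π ^ (r - 1) ≠ 0)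
    (n : ℕ) (hn : 1 ≤ n) (hnd : n ≤ d - 1)
    (F : Set (Submodule R V))
    (hF : F = {U | ∃ δ : Fin d → ℕ, (∀ i, δ i = 0 ∨ δ i = r) ∧
      (Finset.univ.filter (fun i : Fin d => δ i = 0)).card = n ∧ U = Udelta π b δ}) :
    F ⊆ boundary π r ∧ F.Nontrivial ∧ minDist π F = 2 * r ∧
      Nat.card F = d.factorial / (n.factorial * (d - n).factorial) := by
  have : Nontrivial R := nontrivial_of_ne _ _ hπr'
  have hnd' : n < Fintype.card (Fin d) := by rw [Fintype.card_fin]; omega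
  rw [hF, setOf_Udelta_eq_coordCode b hπr (by omega)]
  have hC := coordCode_nontrivial b hn hnd'
  refine ⟨coordCode_subset_boundary b hπr hπr' hn hnd', hC,
    minDist_coordCode b (pow_eq_zero_iff_le_of_pow_pred_ne_zero hπr hπr') hC, ?_⟩
  rw [natCard_coordCode, Fintype.card_fin, Nat.choose_eq_factorial_div_factorial (by omega)]

/-- For `1 ≤ n ≤ d-1`, the set `F_r^n` of submodules `U_δ` with `δ` a permutation of
the vector with `d-n` entries `r` and `n` entries `0` is a spherical code in `V_r` of
minimum distance `2r` and cardinality `d!/(n!(d-n)!)`. -/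
theorem free_permCode_props
    {R : Type*} [CommRing R] [Fintype R] [IsLocalRing R]
    {V : Type*} [AddCommGroup V] [Module R V]
    (d r : ℕ) (hd : 2 ≤ d) (hr : 1 ≤ r) (b : Module.Basis (Fin d) R V)
    (π : R) (hmax : IsLocalRing.maximalIdeal R = Ideal.span {π})
    (hπr : π ^ r = 0) (hπr' : π ^ (r - 1) ≠ 0)
    (n : ℕ) (hn : 1 ≤ n) (hnd : n ≤ d - 1)
    (F : Set (Submodule R V))
    (hF : F = {U | ∃ δ : Fin d → ℕ, (∀ i, δ i = 0 ∨ δ i = r) ∧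
      (Finset.univ.filter (fun i : Fin d => δ i = 0)).card = n ∧ U = Udelta π b δ}) :
    F ⊆ boundary π r ∧ F.Nontrivial ∧ minDist π F = 2 * r ∧
      Nat.card F = d.factorial / (n.factorial * (d - n).factorial) :=
  free_permCode_props_general d r hr b π hπr hπr' n hn hnd F hF

end SphericalSubmoduleCodes
end

section
/- Let ε ∈ ∂E_r^(d) have exactly ℓ+1 distinct coordinate values with ℓ ≥ 1, and write r = δℓ + Z with δ, Z non-negative integers satisfying Z < ℓ. Then the 𝐞-permutation code C = {[U_δ'] : δ' ∈ Sym(d)·ε} satisfies dist(C) ≤ 2δ. -/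
open Pointwise

namespace SphericalSubmoduleCodes

/-! The `ℓ + 1` values of `ε` lie in `[0, r] ⊆ [0, ℓ (δ₀ + 1))`, so by pigeonhole two of them,
`ε i > ε j`, differ by at most `δ₀`. Swapping the coordinates `i` and `j` of `ε` gives a different
codeword, and multiplication by `π ^ (ε i - ε j)` maps each of the two codewords into the other,
so their distance is at most `2 (ε i - ε j) ≤ 2 δ₀`. -/

section Udelta

variable {R : Type*} [CommRing R] {V : Type*} [AddCommGroup V] [Module R V] {d : ℕ}
  (π : R) (b : Module.Basis (Fin d) R V)

lemma not_pow_dvd_pow_of_lt {r a n : ℕ} (hπr : π ^ r = 0) (hπr' : π ^ (r - 1) ≠ 0)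
    (han : a < n) (har : a < r) : ¬ π ^ n ∣ π ^ a := by
  rintro ⟨c, hc⟩
  apply hπr'
  have hdvd : π ^ r ∣ π ^ (r - 1) :=
    calc π ^ r ∣ π ^ n * π ^ (r - 1 - a) := by rw [← pow_add]; exact pow_dvd_pow π (by omega)
      _ ∣ π ^ a * π ^ (r - 1 - a) := by rw [hc, mul_right_comm]; exact dvd_mul_right _ _
      _ = π ^ (r - 1) := by rw [← pow_add]; congr 1; omega
  rwa [hπr, zero_dvd_iff] at hdvd

lemma Udelta_le_comap_coord (δ : Fin d → ℕ) (i : Fin d) :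
    Udelta π b δ ≤ Submodule.comap (b.coord i) (Ideal.span {π ^ δ i}) := by
  refine iSup_le fun k => (Submodule.span_singleton_le_iff_mem _ _).2 ?_
  rw [Submodule.mem_comap, LinearMap.map_smul, Module.Basis.coord_apply, Module.Basis.repr_self,
    Finsupp.single_apply, Ideal.mem_span_singleton]
  split_ifs with hki
  · rw [hki, smul_eq_mul, mul_one]
  · rw [smul_zero]; exact dvd_zero _

lemma pow_smul_basis_notMem_Udelta {r a : ℕ} (hπr : π ^ r = 0) (hπr' : π ^ (r - 1) ≠ 0)
    {δ : Fin d → ℕ} {i : Fin d} (hai : a < δ i) (har : a < r) :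
    (π ^ a) • b i ∉ Udelta π b δ := by
  intro hmem
  have hcoord := Udelta_le_comap_coord π b δ i hmem
  rw [Submodule.mem_comap, LinearMap.map_smul, Module.Basis.coord_apply, Module.Basis.repr_self,
    Finsupp.single_eq_same, smul_eq_mul, mul_one, Ideal.mem_span_singleton] at hcoord
  exact not_pow_dvd_pow_of_lt π hπr hπr' hai har hcoord

lemma Udelta_ne_of_lt {r : ℕ} (hπr : π ^ r = 0) (hπr' : π ^ (r - 1) ≠ 0)
    {δ δ' : Fin d → ℕ} {i : Fin d} (hlt : δ' i < δ i) (hr : δ' i < r) :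
    Udelta π b δ ≠ Udelta π b δ' := by
  intro heq
  have hmem : (π ^ δ' i) • b i ∈ Udelta π b δ' :=
    Submodule.mem_iSup_of_mem i (Submodule.mem_span_singleton_self _)
  exact pow_smul_basis_notMem_Udelta π b hπr hπr' hlt hr (heq ▸ hmem)

lemma smul_Udelta_le {δ δ' : Fin d → ℕ} {m : ℕ} (h : ∀ k, δ' k ≤ m + δ k) :
    (π ^ m) • Udelta π b δ ≤ Udelta π b δ' := by
  rw [Udelta, Submodule.smul_iSup']
  refine iSup_le fun k => Submodule.map_le_iff_le_comap.2 <|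
    (Submodule.span_singleton_le_iff_mem _ _).2 ?_
  rw [Submodule.mem_comap, DistribSMul.toLinearMap_apply, smul_smul, ← pow_add,
    show m + δ k = (m + δ k - δ' k) + δ' k by have := h k; omega, pow_add, ← smul_smul]
  exact Submodule.smul_mem _ _ (Submodule.mem_iSup_of_mem k (Submodule.mem_span_singleton_self _))

lemma nmin_Udelta_le {δ δ' : Fin d → ℕ} {m : ℕ} (h : ∀ k, δ' k ≤ m + δ k) :
    nmin π (Udelta π b δ) (Udelta π b δ') ≤ m :=
  Nat.sInf_le (smul_Udelta_le π b h)

lemma distMod_Udelta_comp_swap_le {ε : Fin d → ℕ} {i j : Fin d} (hji : ε j ≤ ε i) :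
    distMod π (Udelta π b ε) (Udelta π b (ε ∘ Equiv.swap i j)) ≤ 2 * (ε i - ε j) := by
  have hswap : ∀ k, ε (Equiv.swap i j k) ≤ ε i - ε j + ε k ∧
      ε k ≤ ε i - ε j + ε (Equiv.swap i j k) := by
    intro k
    rw [Equiv.swap_apply_def]
    split_ifs with hki hkj <;> subst_vars <;> omega
  have h₁ := nmin_Udelta_le π b (δ' := ε ∘ Equiv.swap i j) fun k => (hswap k).1
  have h₂ := nmin_Udelta_le π b (δ := ε ∘ Equiv.swap i j) fun k => (hswap k).2
  unfold distMod
  omega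

end Udelta

lemma minDist_le_distMod {R : Type*} [CommRing R] {V : Type*} [AddCommGroup V] [Module R V]
    (π : R) {C : Set (Submodule R V)} {U₁ U₂ : Submodule R V} (h₁ : U₁ ∈ C) (h₂ : U₂ ∈ C)
    (hne : U₁ ≠ U₂) : minDist π C ≤ distMod π U₁ U₂ :=
  Nat.sInf_le ⟨U₁, h₁, U₂, h₂, hne, rfl⟩

/-- Pigeonhole over the `ℓ` blocks `[q (δ + 1), (q + 1) (δ + 1))`. -/
lemma exists_lt_sub_le_of_card_lt {S : Finset ℕ} {ℓ δ : ℕ}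
    (hS : ∀ x ∈ S, x < ℓ * (δ + 1)) (hcard : ℓ < S.card) :
    ∃ x ∈ S, ∃ y ∈ S, y < x ∧ x - y ≤ δ := by
  have hmaps : ∀ x ∈ S, x / (δ + 1) ∈ Finset.range ℓ := fun x hx =>
    Finset.mem_range.2 (Nat.div_lt_of_lt_mul (by rw [mul_comm]; exact hS x hx))
  obtain ⟨x, hx, y, hy, hne, hq⟩ :=
    Finset.exists_ne_map_eq_of_card_lt_of_maps_to (by rwa [Finset.card_range]) hmaps
  have hclose : ∀ {u v : ℕ}, u / (δ + 1) = v / (δ + 1) → v < u → u - v ≤ δ := by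
    intro u v huv hvu
    by_contra hfar
    have : v / (δ + 1) + 1 ≤ u / (δ + 1) := by
      rw [← Nat.add_div_right _ δ.succ_pos]
      exact Nat.div_le_div_right (by omega)
    omega
  rcases hne.lt_or_gt with hxy | hyx
  · exact ⟨y, hy, x, hx, hxy, hclose hq.symm hxy⟩
  · exact ⟨x, hx, y, hy, hyx, hclose hq hyx⟩

/-- If `ε ∈ ∂E_r^(d)` has exactly `ℓ+1` distinct values (`ℓ ≥ 1`) and `r = δ₀ℓ + Z`
with `Z < ℓ`, then the `𝐞`-permutation code `C = Sym(d)·ε` satisfies `dist(C) ≤ 2δ₀`. -/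
theorem permCode_minDist_le
    {R : Type*} [CommRing R]
    {V : Type*} [AddCommGroup V] [Module R V]
    (d r : ℕ) (hd : 2 ≤ d) (b : Module.Basis (Fin d) R V)
    (π : R)
    (hπr : π ^ r = 0) (hπr' : π ^ (r - 1) ≠ 0)
    (ε : Fin d → ℕ)
    (hεanti : ∀ i j : Fin d, i ≤ j → ε j ≤ ε i)
    (hε0 : ε ⟨0, by omega⟩ = r)
    (ℓ δ₀ Z : ℕ)
    (hvals : (Finset.image ε Finset.univ).card = ℓ + 1)
    (hrZ : r = δ₀ * ℓ + Z) (hZ : Z < ℓ) :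
    minDist π (permCode π b ε) ≤ 2 * δ₀ := by
  have hε_le : ∀ k, ε k ≤ r := fun k => hε0 ▸ hεanti _ k (Fin.mk_le_of_le_val k.val.zero_le)
  have hvalues : ∀ x ∈ Finset.image ε Finset.univ, x < ℓ * (δ₀ + 1) := by
    intro x hx
    obtain ⟨k, -, rfl⟩ := Finset.mem_image.1 hx
    have := hε_le k
    rw [mul_add, mul_one, mul_comm]
    omega
  obtain ⟨x, hx, y, hy, hyx, hgap⟩ := exists_lt_sub_le_of_card_lt hvalues (by omega)
  obtain ⟨i, -, rfl⟩ := Finset.mem_image.1 hx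
  obtain ⟨j, -, rfl⟩ := Finset.mem_image.1 hy
  have hne : Udelta π b ε ≠ Udelta π b (ε ∘ Equiv.swap i j) :=
    Udelta_ne_of_lt π b hπr hπr' (i := i) (by simpa using hyx)
      (by simpa using hyx.trans_le (hε_le i))
  calc minDist π (permCode π b ε)
      ≤ distMod π (Udelta π b ε) (Udelta π b (ε ∘ Equiv.swap i j)) :=
        minDist_le_distMod π ⟨Equiv.refl _, rfl⟩ ⟨Equiv.swap i j, rfl⟩ hne
    _ ≤ 2 * (ε i - ε j) := distMod_Udelta_comp_swap_le π b hyx.le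
    _ ≤ 2 * δ₀ := by omega

end SphericalSubmoduleCodes
end
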